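/- arXiv:2106.01819 — 11 statements merged into one kernel-verified Lean document; each statement's English description precedes it below -/
import Mathlib

section
/- Let A be an (n+1)×(n+1) real symmetric matrix with top-left n×n principal submatrix B, let a ∈ ℝ^n be the off-diagonal part of the last column of A. Suppose B has simple eigenvalues λ_1 < … < λ_n with orthonormal eigenvectors v_1, …, v_n, A has simple eigenvalues μ_1 < … < μ_{n+1}, and the spectra of A and B are disjoint. Then for every 1 ≤ r ≤ n, the squared projection of a onto the r-th eigenvector of B is given by ⟨a, v_r⟩² = − ( Π_{k=1}^{n+1} (λ_r − μ_k) ) / ( Π_{k=1, k≠r}^{n} (λ_r − λ_k) ). -/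
open Matrix Finset Polynomial

lemma eval_charpoly_aux {m : Type*} [Fintype m] [DecidableEq m] (M : Matrix m m ℝ) (x : ℝ) :
    M.charpoly.eval x = (x • (1 : Matrix m m ℝ) - M).det := by
  rw [Matrix.charpoly, ← Polynomial.coe_evalRingHom, RingHom.map_det]
  congr 1
  ext i j
  by_cases h : i = j <;>
    simp [Matrix.charmatrix_apply, Matrix.one_apply, Matrix.diagonal_apply, h]

lemma charpoly_eq_prod_aux {m : ℕ} (M : Matrix (Fin m) (Fin m) ℝ) (μ : Fin m → ℝ)
    (hinj : Function.Injective μ)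
    (hroot : ∀ k, ∃ w : Fin m → ℝ, w ≠ 0 ∧ M.mulVec w = μ k • w) :
    M.charpoly = ∏ k, (X - C (μ k)) := by
  symm
  apply Polynomial.eq_of_dvd_of_natDegree_le_of_leadingCoeff
  · apply Finset.prod_dvd_of_coprime
    · intro i _ j _ hij
      exact Polynomial.pairwise_coprime_X_sub_C hinj hij
    · intro k _
      rw [Polynomial.dvd_iff_isRoot, Polynomial.IsRoot, eval_charpoly_aux]
      obtain ⟨w, hw, hmw⟩ := hroot k
      rw [← Matrix.exists_mulVec_eq_zero_iff]
      exact ⟨w, hw, by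
        simp [Matrix.sub_mulVec, Matrix.smul_mulVec, Matrix.one_mulVec, hmw]⟩
  · rw [Matrix.charpoly_natDegree_eq_dim,
      Polynomial.natDegree_prod _ _ (fun k _ => Polynomial.X_sub_C_ne_zero _)]
    simp
  · rw [(Polynomial.monic_prod_of_monic _ _ fun k _ => Polynomial.monic_X_sub_C _).leadingCoeff,
      (Matrix.charpoly_monic M).leadingCoeff]


/-- For an `(n+1) × (n+1)` real symmetric matrix `A` with top-left `n × n` principal
submatrix `B` having simple eigenvalues `λ₁ < … < λₙ` with orthonormal eigenvectors
`v₁, …, vₙ`, and `A` having simple eigenvalues `μ₁ < … < μ_{n+1}` disjoint from the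
spectrum of `B`, the squared projection of the off-diagonal part `a` of the last
column of `A` onto `v_r` is
`⟨a, v_r⟩² = − ( Π_{k=1}^{n+1} (λ_r − μ_k) ) / ( Π_{k≠r} (λ_r − λ_k) )`. -/
theorem projection_sq_eq {n : ℕ} (A : Matrix (Fin (n + 1)) (Fin (n + 1)) ℝ)
    (hA : A.IsSymm)
    (B : Matrix (Fin n) (Fin n) ℝ)
    (hB : B = A.submatrix Fin.castSucc Fin.castSucc)
    (lam : Fin n → ℝ) (hlam : StrictMono lam)
    (v : Fin n → Fin n → ℝ)
    (heig : ∀ r, B.mulVec (v r) = lam r • v r)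
    (hortho : ∀ r s, v r ⬝ᵥ v s = if r = s then 1 else 0)
    (μ : Fin (n + 1) → ℝ) (hμ : StrictMono μ)
    (heigA : ∀ k, ∃ w : Fin (n + 1) → ℝ, w ≠ 0 ∧ A.mulVec w = μ k • w)
    (hdisj : ∀ r k, lam r ≠ μ k)
    (a : Fin n → ℝ) (ha : ∀ j, a j = A j.castSucc (Fin.last n)) :
    ∀ r : Fin n,
      (a ⬝ᵥ v r) ^ 2 =
        -(∏ k, (lam r - μ k)) / ∏ k ∈ Finset.univ.erase r, (lam r - lam k) := by
  classical
  intro r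
  set d : ℝ := A (Fin.last n) (Fin.last n) with hd
  set c : Fin n → ℝ := fun s => a ⬝ᵥ v s with hc
  set V : Matrix (Fin n) (Fin n) ℝ := Matrix.of (fun i j => v j i) with hV
  have hVtV : Vᵀ * V = 1 := by
    ext s t
    simpa [Matrix.mul_apply, Matrix.one_apply, hV, dotProduct] using hortho s t
  have hBV : B * V = V * Matrix.diagonal lam := by
    ext i s
    have h1 : (B * V) i s = B.mulVec (v s) i := by
      simp [Matrix.mul_apply, Matrix.mulVec, dotProduct, hV]
    rw [h1, heig s]
    simp [Matrix.mul_diagonal, hV, mul_comm]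
  have hVBV : Vᵀ * B * V = Matrix.diagonal lam := by
    rw [Matrix.mul_assoc, hBV, ← Matrix.mul_assoc, hVtV, Matrix.one_mul]
  -- block forms
  set F : ℝ → Matrix (Fin n ⊕ Fin 1) (Fin n ⊕ Fin 1) ℝ := fun x =>
    Matrix.fromBlocks (x • 1 - B) (Matrix.of fun i _ => -a i)
      (Matrix.of fun _ j => -a j) (Matrix.of fun _ _ => x - d) with hF
  set G : ℝ → Matrix (Fin n ⊕ Fin 1) (Fin n ⊕ Fin 1) ℝ := fun x =>
    Matrix.fromBlocks (x • 1 - Matrix.diagonal lam) (Matrix.of fun k _ => -c k)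
      (Matrix.of fun _ k => -c k) (Matrix.of fun _ _ => x - d) with hG
  have hlast : Fin.natAdd n (0 : Fin 1) = Fin.last n := by ext; simp
  have hcast : ∀ i : Fin n, Fin.castAdd 1 i = Fin.castSucc i := fun _ => rfl
  have hAsymm : ∀ i j, A i j = A j i := fun i j => by
    rw [← Matrix.transpose_apply A j i, hA]
  have haj : ∀ j : Fin n, A (Fin.last n) j.castSucc = a j := fun j => by
    rw [ha j, hAsymm]
  have hsub : ∀ x : ℝ,
      ((x • (1 : Matrix (Fin (n+1)) (Fin (n+1)) ℝ) - A).submatrix finSumFinEquiv finSumFinEquiv)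
        = F x := by
    intro x
    ext i j
    rcases i with i | i <;> rcases j with j | j
    · simp [hF, Matrix.submatrix_apply, Matrix.one_apply, hB, hcast, Fin.castSucc_inj]
    · have h0 : j = 0 := Subsingleton.elim _ _
      have hne : Fin.castSucc i ≠ Fin.last n := (Fin.castSucc_lt_last i).ne
      simp [hF, Matrix.submatrix_apply, h0, hlast, hcast, Matrix.one_apply, hne, ha]
    · have h0 : i = 0 := Subsingleton.elim _ _
      have hne : Fin.last n ≠ Fin.castSucc j := (Fin.castSucc_lt_last j).ne'
      simp [hF, Matrix.submatrix_apply, h0, hlast, hcast, Matrix.one_apply, hne, haj]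
    · have h0 : i = 0 := Subsingleton.elim _ _
      have h0' : j = 0 := Subsingleton.elim _ _
      simp [hF, Matrix.submatrix_apply, h0, h0', hlast, Matrix.one_apply, hd]
  have hdetF : ∀ x : ℝ, (x • (1 : Matrix (Fin (n+1)) (Fin (n+1)) ℝ) - A).det = (F x).det := by
    intro x
    rw [← hsub x, Matrix.det_submatrix_equiv_self]
  -- conjugation
  set W : Matrix (Fin n ⊕ Fin 1) (Fin n ⊕ Fin 1) ℝ := Matrix.fromBlocks Vᵀ 0 0 1 with hW
  set W' : Matrix (Fin n ⊕ Fin 1) (Fin n ⊕ Fin 1) ℝ := Matrix.fromBlocks V 0 0 1 with hW'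
  have hblk11 : ∀ x : ℝ, Vᵀ * (x • 1 - B) * V = x • 1 - Matrix.diagonal lam := by
    intro x
    have h1 : Vᵀ * (x • (1 : Matrix (Fin n) (Fin n) ℝ) - B) * V
        = x • (Vᵀ * V) - Vᵀ * B * V := by
      rw [Matrix.mul_sub, Matrix.sub_mul, mul_smul_comm, Matrix.mul_one, smul_mul_assoc]
    rw [h1, hVtV, hVBV]
  have hblk12 : Vᵀ * (Matrix.of fun i (_ : Fin 1) => -a i) = Matrix.of fun k _ => -c k := by
    ext k j
    simp [Matrix.mul_apply, hV, hc, dotProduct, mul_comm, ← Finset.sum_neg_distrib]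
  have hblk21 : (Matrix.of fun (_ : Fin 1) j => -a j) * V = Matrix.of fun _ k => -c k := by
    ext i k
    simp [Matrix.mul_apply, hV, hc, dotProduct, neg_mul, ← Finset.sum_neg_distrib]
  have hWFW : ∀ x : ℝ, W * F x * W' = G x := by
    intro x
    simp only [hW, hW', hF, hG, Matrix.fromBlocks_multiply, Matrix.zero_mul, Matrix.mul_zero,
      Matrix.mul_one, Matrix.one_mul, add_zero, zero_add]
    rw [hblk11 x, hblk12, hblk21]
  have hdetW : W.det * W'.det = 1 := by
    rw [hW, hW', Matrix.det_fromBlocks_zero₂₁, Matrix.det_fromBlocks_zero₂₁, Matrix.det_one,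
      mul_one, mul_one, ← Matrix.det_mul, hVtV, Matrix.det_one]
  have hdetFG : ∀ x : ℝ, (F x).det = (G x).det := by
    intro x
    have h1 : (G x).det = W.det * (F x).det * W'.det := by
      rw [← Matrix.det_mul, ← Matrix.det_mul, hWFW]
    rw [h1, mul_right_comm, hdetW, one_mul]
  -- the rational function identity on a dense set
  set g : ℝ → ℝ := fun x =>
    (x - d) * ∏ k, (x - lam k) - ∑ k, (c k) ^ 2 * ∏ j ∈ Finset.univ.erase k, (x - lam j) with hg
  have hGg : ∀ x : ℝ, (∀ k, x ≠ lam k) → (G x).det = g x := by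
    intro x hx
    have hw : ∀ k, x - lam k ≠ 0 := fun k => sub_ne_zero.mpr (hx k)
    have hP : (x • (1 : Matrix (Fin n) (Fin n) ℝ) - Matrix.diagonal lam)
        = Matrix.diagonal (fun k => x - lam k) := by
      ext i j
      by_cases h : i = j <;> simp [Matrix.diagonal_apply, Matrix.one_apply, h]
    letI : Invertible (Matrix.diagonal (fun k => x - lam k)) :=
      ⟨Matrix.diagonal (fun k => (x - lam k)⁻¹),
        by
          rw [Matrix.diagonal_mul_diagonal,
            show (fun k => (x - lam k)⁻¹ * (x - lam k)) = fun _ => (1 : ℝ) from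
              funext fun k => inv_mul_cancel₀ (hw k), Matrix.diagonal_one],
        by
          rw [Matrix.diagonal_mul_diagonal,
            show (fun k => (x - lam k) * (x - lam k)⁻¹) = fun _ => (1 : ℝ) from
              funext fun k => mul_inv_cancel₀ (hw k), Matrix.diagonal_one]⟩
    have hinv : ⅟(Matrix.diagonal (fun k => x - lam k))
        = Matrix.diagonal (fun k => (x - lam k)⁻¹) := rfl
    simp only [hG, hP]
    rw [Matrix.det_fromBlocks₁₁, hinv, Matrix.det_diagonal, Matrix.det_fin_one]
    have hRQ : (((Matrix.of fun (_ : Fin 1) k => -c k) : Matrix (Fin 1) (Fin n) ℝ) *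
        Matrix.diagonal (fun k => (x - lam k)⁻¹) *
        ((Matrix.of fun k (_ : Fin 1) => -c k) : Matrix (Fin n) (Fin 1) ℝ)) 0 0
        = ∑ k, (c k) ^ 2 * (x - lam k)⁻¹ := by
      simp only [Matrix.mul_apply, Matrix.diagonal_apply, Matrix.of_apply, mul_ite, mul_zero,
        ite_mul, zero_mul, Finset.sum_ite_eq', Finset.mem_univ, if_true]
      exact Finset.sum_congr rfl fun k _ => by ring
    rw [Matrix.sub_apply, hRQ]
    simp only [Matrix.of_apply, hg]
    rw [mul_sub, Finset.mul_sum]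
    congr 1
    · ring
    · apply Finset.sum_congr rfl
      intro k _
      rw [← Finset.mul_prod_erase Finset.univ _ (Finset.mem_univ k)]
      field_simp [hw k]
  have hfg : ∀ x : ℝ, (x • (1 : Matrix (Fin (n+1)) (Fin (n+1)) ℝ) - A).det = g x := by
    have hcontf : Continuous fun x : ℝ =>
        (x • (1 : Matrix (Fin (n+1)) (Fin (n+1)) ℝ) - A).det :=
      ((continuous_id.smul continuous_const).sub continuous_const).matrix_det
    have hcontg : Continuous g := by
      apply Continuous.sub
      · exact (continuous_id.sub continuous_const).mul
          (continuous_finset_prod _ fun k _ => continuous_id.sub continuous_const)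
      · exact continuous_finset_sum _ fun k _ => continuous_const.mul
          (continuous_finset_prod _ fun j _ => continuous_id.sub continuous_const)
    have hdense : Dense {x : ℝ | ∀ k, x ≠ lam k} := by
      have hset : {x : ℝ | ∀ k, x ≠ lam k} = (Set.range lam)ᶜ := by
        ext x
        simp [Set.mem_range, eq_comm]
      rw [hset]
      exact Set.Countable.dense_compl ℝ ((Set.finite_range lam).countable)
    have heqon : Set.EqOn (fun x : ℝ => (x • (1 : Matrix (Fin (n+1)) (Fin (n+1)) ℝ) - A).det) g
        {x : ℝ | ∀ k, x ≠ lam k} := by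
      intro x hx
      show (x • (1 : Matrix (Fin (n+1)) (Fin (n+1)) ℝ) - A).det = g x
      rw [hdetF x, hdetFG x, hGg x hx]
    have := Continuous.ext_on hdense hcontf hcontg heqon
    exact fun x => congrFun this x
  -- evaluate at lam r
  have hchar : ((lam r) • (1 : Matrix (Fin (n+1)) (Fin (n+1)) ℝ) - A).det
      = ∏ k, (lam r - μ k) := by
    rw [← eval_charpoly_aux, charpoly_eq_prod_aux A μ hμ.injective heigA]
    simp [Polynomial.eval_prod]
  have hglam : g (lam r) = -((c r) ^ 2 * ∏ j ∈ Finset.univ.erase r, (lam r - lam j)) := by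
    simp only [hg]
    rw [Finset.prod_eq_zero (Finset.mem_univ r) (sub_self (lam r)), mul_zero, zero_sub, neg_inj]
    rw [Finset.sum_eq_single r]
    · intro k _ hk
      rw [Finset.prod_eq_zero (Finset.mem_erase.mpr ⟨Ne.symm hk, Finset.mem_univ r⟩)
        (sub_self (lam r)), mul_zero]
    · intro h
      exact absurd (Finset.mem_univ r) h
  have hkey : ∏ k, (lam r - μ k) = -((c r) ^ 2 * ∏ j ∈ Finset.univ.erase r, (lam r - lam j)) := by
    rw [← hchar, hfg (lam r), hglam]
  have hPne : ∏ j ∈ Finset.univ.erase r, (lam r - lam j) ≠ 0 := by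
    apply Finset.prod_ne_zero_iff.mpr
    intro j hj
    exact sub_ne_zero.mpr fun h => (Finset.mem_erase.mp hj).1 (hlam.injective h).symm
  rw [eq_div_iff hPne]
  linarith [hkey]
end

section
/- Let A be an (n+1)×(n+1) real symmetric matrix with top-left n×n principal submatrix B. Suppose B has simple eigenvalues λ_1 < … < λ_n, A has simple eigenvalues μ_1 < … < μ_{n+1}, and the spectra of A and B are disjoint. If w is a unit eigenvector of A for the eigenvalue μ_k, then the square of its last entry equals (w_{n+1})² = ( Π_{r=1}^{n} (μ_k − λ_r) ) / ( Π_{r=1, r≠k}^{n+1} (μ_k − μ_r) ). -/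
open Matrix Finset

lemma normalize_eig {m : ℕ} (C : Matrix (Fin m) (Fin m) ℝ) (ν : ℝ) (u : Fin m → ℝ)
    (hu : u ≠ 0) (he : C.mulVec u = ν • u) :
    ∃ v : Fin m → ℝ, v ⬝ᵥ v = 1 ∧ C.mulVec v = ν • v := by
  have hpos : 0 < u ⬝ᵥ u := by
    have h1 : u ⬝ᵥ u ≠ 0 := by
      simpa [dotProduct_self_eq_zero] using hu
    have h0 : 0 ≤ u ⬝ᵥ u := Finset.sum_nonneg fun i _ => mul_self_nonneg _
    exact lt_of_le_of_ne h0 (Ne.symm h1)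
  refine ⟨(Real.sqrt (u ⬝ᵥ u))⁻¹ • u, ?_, ?_⟩
  · have hs : Real.sqrt (u ⬝ᵥ u) ≠ 0 := by positivity
    rw [smul_dotProduct, dotProduct_smul, smul_smul, smul_eq_mul]
    rw [show u ⬝ᵥ u = Real.sqrt (u ⬝ᵥ u) * Real.sqrt (u ⬝ᵥ u) from (Real.mul_self_sqrt hpos.le).symm]
    field_simp
    rw [Real.sqrt_sq (Real.sqrt_nonneg _)]
  · rw [Matrix.mulVec_smul, he, smul_comm]

-- orthogonal decomposition
lemma ortho_decomp {m : ℕ} (C : Matrix (Fin m) (Fin m) ℝ) (hC : C.IsSymm)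
    (ν : Fin m → ℝ) (hν : Function.Injective ν) (v : Fin m → Fin m → ℝ)
    (hunit : ∀ s, v s ⬝ᵥ v s = 1) (heig : ∀ s, C.mulVec (v s) = ν s • v s) :
    ∃ Q : Matrix (Fin m) (Fin m) ℝ, Q * Qᵀ = 1 ∧ Qᵀ * Q = 1 ∧
      C = Q * diagonal ν * Qᵀ ∧ (∀ i s, Q i s = v s i) := by
  set Q : Matrix (Fin m) (Fin m) ℝ := Matrix.of (fun i s => v s i) with hQ
  have hsym : ∀ x y : Fin m → ℝ, C.mulVec x ⬝ᵥ y = x ⬝ᵥ C.mulVec y := by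
    intro x y
    rw [Matrix.dotProduct_mulVec, ← Matrix.mulVec_transpose, hC.eq,
      dotProduct_comm]
  have horth : ∀ s t, s ≠ t → v s ⬝ᵥ v t = 0 := by
    intro s t hst
    have h1 : ν s * (v s ⬝ᵥ v t) = ν t * (v s ⬝ᵥ v t) := by
      have := hsym (v s) (v t)
      rwa [heig s, heig t, smul_dotProduct, dotProduct_smul,
        smul_eq_mul, smul_eq_mul] at this
    have hne : ν s ≠ ν t := fun h => hst (hν h)
    have := sub_eq_zero.mpr h1
    rw [← sub_mul] at this
    rcases mul_eq_zero.mp this with h | h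
    · exact absurd (sub_eq_zero.mp h) hne
    · exact h
  have hQtQ : Qᵀ * Q = 1 := by
    ext s t
    simp only [Matrix.mul_apply, Matrix.transpose_apply, hQ, Matrix.of_apply]
    by_cases hst : s = t
    · subst hst; simpa [dotProduct] using hunit s
    · have := horth s t hst
      simp only [dotProduct] at this
      simp [this, Matrix.one_apply, hst]
  have hQQt : Q * Qᵀ = 1 := mul_eq_one_comm.mp hQtQ
  refine ⟨Q, hQQt, hQtQ, ?_, fun i s => rfl⟩
  have hAQ : C * Q = Q * diagonal ν := by
    ext i s
    have h1 : (C * Q) i s = C.mulVec (v s) i := by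
      simp [Matrix.mul_apply, Matrix.mulVec, dotProduct, hQ]
    rw [h1, heig s]
    simp only [Pi.smul_apply, smul_eq_mul]
    simp [Matrix.mul_apply, Matrix.diagonal, hQ, mul_comm]
  calc C = C * Q * Qᵀ := by rw [Matrix.mul_assoc, hQQt, Matrix.mul_one]
    _ = Q * diagonal ν * Qᵀ := by rw [hAQ]

-- determinant of x•1 − C
lemma det_smul_one_sub {m : ℕ} (C : Matrix (Fin m) (Fin m) ℝ) (hC : C.IsSymm)
    (ν : Fin m → ℝ) (hν : Function.Injective ν)
    (heig : ∀ s, ∃ u : Fin m → ℝ, u ≠ 0 ∧ C.mulVec u = ν s • u) (x : ℝ) :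
    (x • (1 : Matrix (Fin m) (Fin m) ℝ) - C).det = ∏ s, (x - ν s) := by
  choose u hu0 hue using heig
  choose v hv1 hve using fun s => normalize_eig C (ν s) (u s) (hu0 s) (hue s)
  obtain ⟨Q, hQQt, hQtQ, hdec, -⟩ := ortho_decomp C hC ν hν v hv1 hve
  have key : x • (1 : Matrix (Fin m) (Fin m) ℝ) - C
      = Q * diagonal (fun s => x - ν s) * Qᵀ := by
    have h1 : x • (1 : Matrix (Fin m) (Fin m) ℝ) = Q * (x • 1) * Qᵀ := by
      rw [Matrix.mul_smul, Matrix.mul_one, Matrix.smul_mul, hQQt]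
    rw [hdec, h1, ← Matrix.sub_mul, ← Matrix.mul_sub]
    congr 1
    congr 1
    ext i j
    by_cases h : i = j <;> simp [Matrix.diagonal, Matrix.one_apply, h, mul_comm]
  rw [key, Matrix.det_mul, Matrix.det_mul, Matrix.det_diagonal]
  have : Q.det * Qᵀ.det = 1 := by rw [← Matrix.det_mul, hQQt, Matrix.det_one]
  rw [Matrix.det_transpose] at this ⊢
  linear_combination (∏ s, (x - ν s)) * this

lemma decomp_sub {m : ℕ} (C Q : Matrix (Fin m) (Fin m) ℝ) (ν : Fin m → ℝ)
    (hQQt : Q * Qᵀ = 1) (hdec : C = Q * diagonal ν * Qᵀ) (x : ℝ) :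
    x • (1 : Matrix (Fin m) (Fin m) ℝ) - C
      = Q * diagonal (fun s => x - ν s) * Qᵀ := by
  have h1 : x • (1 : Matrix (Fin m) (Fin m) ℝ) = Q * (x • 1) * Qᵀ := by
    rw [Matrix.mul_smul, Matrix.mul_one, Matrix.smul_mul, hQQt]
  rw [hdec, h1, ← Matrix.sub_mul, ← Matrix.mul_sub]
  congr 2
  ext i j
  by_cases h : i = j <;> simp [Matrix.diagonal, Matrix.one_apply, h, mul_comm]


/-- Eigenvector-eigenvalue identity: for an `(n+1) × (n+1)` real symmetric matrix `A`
with top-left `n × n` principal submatrix `B` having simple eigenvalues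
`λ₁ < … < λₙ`, `A` having simple eigenvalues `μ₁ < … < μ_{n+1}` disjoint from the
spectrum of `B`, if `w` is a unit eigenvector of `A` for `μ_k` then
`(w_{n+1})² = ( Π_r (μ_k − λ_r) ) / ( Π_{r≠k} (μ_k − μ_r) )`. -/
theorem eigenvector_eigenvalue_identity {n : ℕ}
    (A : Matrix (Fin (n + 1)) (Fin (n + 1)) ℝ) (hA : A.IsSymm)
    (B : Matrix (Fin n) (Fin n) ℝ)
    (hB : B = A.submatrix Fin.castSucc Fin.castSucc)
    (lam : Fin n → ℝ) (hlam : StrictMono lam)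
    (heigB : ∀ r, ∃ u : Fin n → ℝ, u ≠ 0 ∧ B.mulVec u = lam r • u)
    (μ : Fin (n + 1) → ℝ) (hμ : StrictMono μ)
    (heigA : ∀ k, ∃ w : Fin (n + 1) → ℝ, w ≠ 0 ∧ A.mulVec w = μ k • w)
    (hdisj : ∀ r k, lam r ≠ μ k)
    (k : Fin (n + 1)) (w : Fin (n + 1) → ℝ)
    (hw : w ⬝ᵥ w = 1) (hweig : A.mulVec w = μ k • w) :
    (w (Fin.last n)) ^ 2 =
      (∏ r, (μ k - lam r)) / ∏ r ∈ Finset.univ.erase k, (μ k - μ r) := by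
  have hBsym : B.IsSymm := by
    rw [hB]
    ext i j
    simp only [Matrix.transpose_apply, Matrix.submatrix_apply]
    exact congrFun (congrFun hA _) _
  -- determinant of μ k • 1 − B
  have hdetB : (μ k • (1 : Matrix (Fin n) (Fin n) ℝ) - B).det = ∏ r, (μ k - lam r) :=
    det_smul_one_sub B hBsym lam hlam.injective heigB (μ k)
  -- eigenvector family for A, with w in slot k
  choose u hu0 hue using heigA
  choose v0 hv01 hv0e using fun s => normalize_eig A (μ s) (u s) (hu0 s) (hue s)
  set v : Fin (n + 1) → Fin (n + 1) → ℝ := fun s => if s = k then w else v0 s with hv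
  have hvunit : ∀ s, v s ⬝ᵥ v s = 1 := by
    intro s; by_cases h : s = k <;> simp [hv, h, hw, hv01]
  have hveig : ∀ s, A.mulVec (v s) = μ s • v s := by
    intro s; by_cases h : s = k <;> simp [hv, h, hweig, hv0e]
  obtain ⟨Q, hQQt, hQtQ, hdec, hQcol⟩ :=
    ortho_decomp A hA μ hμ.injective v hvunit hveig
  set d : Fin (n + 1) → ℝ := fun s => μ k - μ s with hd
  set M : Matrix (Fin (n + 1)) (Fin (n + 1)) ℝ := μ k • 1 - A with hM
  have hMdec : M = Q * diagonal d * Qᵀ := decomp_sub A Q μ hQQt hdec (μ k)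
  have hdet1 : Q.det * Q.det = 1 := by
    have := congrArg Matrix.det hQQt
    rwa [Matrix.det_mul, Matrix.det_transpose, Matrix.det_one] at this
  -- adjugates
  have hadjQ : adjugate Q = Q.det • Qᵀ := by
    have h1 := Matrix.mul_adjugate Q
    have h2 := congrArg (fun X => Qᵀ * X) h1
    simp only [← Matrix.mul_assoc, hQtQ, Matrix.one_mul, Matrix.mul_smul,
      Matrix.mul_one] at h2
    exact h2
  have hadjQt : adjugate Qᵀ = Q.det • Q := by
    have h1 := Matrix.mul_adjugate Qᵀ
    have h2 := congrArg (fun X => Q * X) h1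
    simp only [← Matrix.mul_assoc, hQQt, Matrix.one_mul, Matrix.mul_smul,
      Matrix.mul_one, Matrix.det_transpose] at h2
    exact h2
  set c : Fin (n + 1) → ℝ := fun s => ∏ t ∈ Finset.univ.erase s, d t with hc
  have hadjM : adjugate M = Q * diagonal c * Qᵀ := by
    rw [hMdec, Matrix.adjugate_mul_distrib, Matrix.adjugate_mul_distrib,
      Matrix.adjugate_diagonal, hadjQ, hadjQt]
    rw [Matrix.mul_smul, Matrix.smul_mul, Matrix.mul_smul, smul_smul, hdet1,
      one_smul, Matrix.mul_assoc]
  -- c s = 0 for s ≠ k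
  have hczero : ∀ s, s ≠ k → c s = 0 := by
    intro s hs
    apply Finset.prod_eq_zero (i := k)
    · exact Finset.mem_erase.mpr ⟨fun h => hs h.symm, Finset.mem_univ k⟩
    · simp [hd]
  -- entry (last, last) via decomposition
  have hentry1 : adjugate M (Fin.last n) (Fin.last n) = c k * (w (Fin.last n)) ^ 2 := by
    rw [hadjM, Matrix.mul_apply]
    simp only [Matrix.mul_diagonal, Matrix.transpose_apply]
    rw [Finset.sum_eq_single k]
    · rw [hQcol]
      simp only [hv, if_pos rfl]
      ring
    · intro s _ hs
      simp [hczero s hs]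
    · simp
  -- entry (last, last) via minor
  have hsub : M.submatrix Fin.castSucc Fin.castSucc
      = μ k • (1 : Matrix (Fin n) (Fin n) ℝ) - B := by
    ext i j
    simp only [Matrix.submatrix_apply, hM, Matrix.sub_apply, Matrix.smul_apply,
      Matrix.one_apply, hB, smul_eq_mul, Fin.castSucc_inj]
  have hentry2 : adjugate M (Fin.last n) (Fin.last n)
      = (μ k • (1 : Matrix (Fin n) (Fin n) ℝ) - B).det := by
    rw [Matrix.adjugate_apply, Matrix.det_succ_row _ (Fin.last n)]
    rw [Finset.sum_eq_single (Fin.last n)]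
    · have hsign : ((-1 : ℝ)) ^ ((Fin.last n : ℕ) + (Fin.last n : ℕ)) = 1 :=
        Even.neg_one_pow ⟨n, by simp [Fin.val_last]⟩
      rw [hsign, one_mul]
      rw [Matrix.updateRow_apply]
      simp only [if_pos rfl, Pi.single_eq_same, one_mul]
      have hsm : (M.updateRow (Fin.last n) (Pi.single (Fin.last n) 1)).submatrix
          (Fin.last n).succAbove (Fin.last n).succAbove
          = μ k • (1 : Matrix (Fin n) (Fin n) ℝ) - B := by
        rw [Fin.succAbove_last, ← hsub]
        ext i j
        rw [Matrix.submatrix_apply, Matrix.submatrix_apply, Matrix.updateRow_apply,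
          if_neg (Fin.castSucc_lt_last i).ne]
      rw [hsm]
      simp
    · intro j _ hj
      rw [Matrix.updateRow_apply]
      simp [Pi.single_eq_of_ne hj]
    · simp
  -- combine
  have hck : c k ≠ 0 := by
    rw [hc]
    apply Finset.prod_ne_zero_iff.mpr
    intro t ht
    have : t ≠ k := (Finset.mem_erase.mp ht).1
    simp only [hd]
    exact sub_ne_zero.mpr fun h => this (hμ.injective h.symm)
  have hkey : c k * (w (Fin.last n)) ^ 2 = ∏ r, (μ k - lam r) := by
    rw [← hentry1, hentry2, hdetB]
  have hcform : (∏ r ∈ Finset.univ.erase k, (μ k - μ r)) = c k := rfl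
  rw [hcform, ← hkey]
  field_simp
end

section
/- Uniqueness of the inductive reconstruction step: let B be an n×n real symmetric matrix with simple spectrum and orthonormal eigenvectors v_1, …, v_n. Let A and A′ be two (n+1)×(n+1) real symmetric matrices whose top-left n×n principal submatrix equals B, whose spectra (counted with multiplicity) coincide and are disjoint from the spectrum of B, and such that for every 1 ≤ r ≤ n the inner products ⟨a, v_r⟩ and ⟨a′, v_r⟩ have the same sign (both ≥ 0 or both < 0), where a and a′ are the off-diagonal parts of the last columns of A and A′ respectively. Then A = A′. -/
open Matrix

open Polynomial

lemma charpoly_eval_aux {m : Type*} [DecidableEq m] [Fintype m]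
    (M : Matrix m m ℝ) (x : ℝ) :
    M.charpoly.eval x = (x • (1 : Matrix m m ℝ) - M).det := by
  unfold Matrix.charpoly
  rw [← Polynomial.coe_evalRingHom, RingHom.map_det]
  congr 1
  ext i j
  by_cases h : i = j <;>
    simp [charmatrix_apply, Matrix.diagonal_apply, h, Matrix.one_apply, Matrix.smul_apply,
      Matrix.sub_apply]

lemma key_charpoly {n : ℕ} (B : Matrix (Fin n) (Fin n) ℝ)
    (lam : Fin n → ℝ) (v : Fin n → Fin n → ℝ)
    (heig : ∀ r, B.mulVec (v r) = lam r • v r)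
    (hortho : ∀ r s, v r ⬝ᵥ v s = if r = s then 1 else 0)
    (A : Matrix (Fin (n+1)) (Fin (n+1)) ℝ) (hAsymm : A.IsSymm)
    (hsubA : A.submatrix Fin.castSucc Fin.castSucc = B)
    (a : Fin n → ℝ) (haA : ∀ j, a j = A j.castSucc (Fin.last n)) :
    A.charpoly = (X - C (A (Fin.last n) (Fin.last n))) * ∏ s, (X - C (lam s))
      - ∑ s, C ((a ⬝ᵥ v s)^2) * ∏ t ∈ Finset.univ.erase s, (X - C (lam t)) := by
  set d : ℝ := A (Fin.last n) (Fin.last n) with hd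
  set c : Fin n → ℝ := fun s => a ⬝ᵥ v s with hc
  set V : Matrix (Fin n) (Fin n) ℝ := Matrix.of fun i j => v j i with hV
  have hVtV : Vᵀ * V = 1 := by
    ext i j
    have h := hortho i j
    simpa [Matrix.mul_apply, dotProduct, Matrix.one_apply, hV] using h
  have hVVt : V * Vᵀ = 1 := mul_eq_one_comm.mp hVtV
  have hBV : B * V = V * Matrix.diagonal lam := by
    ext i j
    rw [Matrix.mul_diagonal]
    have h := congrFun (heig j) i
    simp only [Matrix.mulVec, dotProduct, Pi.smul_apply, smul_eq_mul] at h
    simp [Matrix.mul_apply, hV, h, mul_comm]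
  set e : Fin n ⊕ Fin 1 ≃ Fin (n+1) := finSumFinEquiv with he
  have he1 : ∀ i : Fin n, e (Sum.inl i) = i.castSucc := fun i => rfl
  have he2 : ∀ j : Fin 1, e (Sum.inr j) = Fin.last n := by
    intro j
    have : j = 0 := Subsingleton.elim _ _
    subst this
    rfl
  set Ahat : Matrix (Fin n ⊕ Fin 1) (Fin n ⊕ Fin 1) ℝ := A.submatrix e e with hAhat
  have hAhatB : Ahat = Matrix.fromBlocks B (Matrix.of fun i (_ : Fin 1) => a i)
      (Matrix.of fun (_ : Fin 1) j => a j) (Matrix.of fun _ _ => d) := by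
    ext i j
    cases i with
    | inl i =>
      cases j with
      | inl j =>
        simp only [hAhat, Matrix.submatrix_apply, he1, Matrix.fromBlocks_apply₁₁]
        rw [← hsubA]; rfl
      | inr j =>
        simp only [hAhat, Matrix.submatrix_apply, he1, he2, Matrix.fromBlocks_apply₁₂]
        simp [haA i]
    | inr i =>
      cases j with
      | inl j =>
        simp only [hAhat, Matrix.submatrix_apply, he1, he2, Matrix.fromBlocks_apply₂₁]
        rw [hAsymm.apply]
        simp [haA j]
      | inr j =>
        simp only [hAhat, Matrix.submatrix_apply, he2, Matrix.fromBlocks_apply₂₂]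
        simp [hd]
  set P : Matrix (Fin n ⊕ Fin 1) (Fin n ⊕ Fin 1) ℝ :=
    Matrix.fromBlocks V 0 0 1 with hP
  have hPt : Pᵀ = Matrix.fromBlocks Vᵀ 0 0 1 := by
    simp [hP, Matrix.fromBlocks_transpose]
  have hPPt : P * Pᵀ = 1 := by
    rw [hPt, hP, Matrix.fromBlocks_multiply]
    simp [hVVt, ← Matrix.fromBlocks_one]
  set T : Matrix (Fin n ⊕ Fin 1) (Fin n ⊕ Fin 1) ℝ :=
    Matrix.fromBlocks (Matrix.diagonal lam) (Matrix.of fun i (_ : Fin 1) => c i)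
      (Matrix.of fun (_ : Fin 1) j => c j) (Matrix.of fun _ _ => d) with hT
  have h11 : Vᵀ * B * V = Matrix.diagonal lam := by
    rw [Matrix.mul_assoc, hBV, ← Matrix.mul_assoc, hVtV, one_mul]
  have h12 : Vᵀ * (Matrix.of fun i (_ : Fin 1) => a i) = (Matrix.of fun i (_ : Fin 1) => c i) := by
    ext i j
    simp [Matrix.mul_apply, hV, hc, dotProduct, mul_comm]
  have h21 : (Matrix.of fun (_ : Fin 1) j => a j) * V = (Matrix.of fun (_ : Fin 1) j => c j) := by
    ext i j
    simp [Matrix.mul_apply, hV, hc, dotProduct]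
  have hPtAP : Pᵀ * Ahat * P = T := by
    rw [hPt, hAhatB, hP, Matrix.fromBlocks_multiply, Matrix.fromBlocks_multiply, hT]
    simp only [Matrix.zero_mul, Matrix.mul_zero, Matrix.mul_one, Matrix.one_mul,
      add_zero, zero_add]
    rw [h11, h12, h21]
  have hAhatT : Ahat = P * T * Pᵀ := by
    rw [← hPtAP]
    calc Ahat = (P * Pᵀ) * Ahat * (P * Pᵀ) := by rw [hPPt, one_mul, mul_one]
    _ = P * (Pᵀ * Ahat * P) * Pᵀ := by simp only [Matrix.mul_assoc]
  have heval : ∀ x : ℝ, (∀ s, x ≠ lam s) →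
      A.charpoly.eval x
        = (x - d) * ∏ s, (x - lam s)
          - ∑ s, (c s)^2 * ∏ t ∈ Finset.univ.erase s, (x - lam t) := by
    intro x hx
    have hxs : ∀ s, x - lam s ≠ 0 := fun s => sub_ne_zero.mpr (hx s)
    rw [charpoly_eval_aux]
    have hdet1 : (x • (1 : Matrix (Fin (n+1)) (Fin (n+1)) ℝ) - A).det
        = (x • (1 : Matrix (Fin n ⊕ Fin 1) (Fin n ⊕ Fin 1) ℝ) - Ahat).det := by
      rw [← Matrix.det_submatrix_equiv_self e]
      congr 1
      ext i j
      simp [Matrix.submatrix_apply, Matrix.sub_apply, Matrix.smul_apply, Matrix.one_apply,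
        e.injective.eq_iff, hAhat]
    rw [hdet1, hAhatT]
    have hconj : x • (1 : Matrix (Fin n ⊕ Fin 1) (Fin n ⊕ Fin 1) ℝ) - P * T * Pᵀ
        = P * (x • 1 - T) * Pᵀ := by
      rw [Matrix.mul_sub, Matrix.sub_mul]
      congr 1
      rw [Matrix.mul_smul, Matrix.mul_one, Matrix.smul_mul, hPPt]
    rw [hconj, Matrix.det_mul, Matrix.det_mul]
    have hdP : P.det * Pᵀ.det = 1 := by rw [← Matrix.det_mul, hPPt, Matrix.det_one]
    have hxT : x • (1 : Matrix (Fin n ⊕ Fin 1) (Fin n ⊕ Fin 1) ℝ) - T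
        = Matrix.fromBlocks (Matrix.diagonal fun s => x - lam s)
          (Matrix.of fun i (_ : Fin 1) => -(c i)) (Matrix.of fun (_ : Fin 1) j => -(c j))
          (Matrix.of fun (_ : Fin 1) _ => x - d) := by
      ext i j
      cases i with
      | inl i =>
        cases j with
        | inl j =>
          by_cases hij : i = j <;>
            simp [hT, Matrix.sub_apply, Matrix.smul_apply, Matrix.one_apply,
              Matrix.diagonal_apply, hij]
        | inr j => simp [hT, Matrix.sub_apply, Matrix.smul_apply, Matrix.one_apply]
      | inr i =>
        cases j with
        | inl j => simp [hT, Matrix.sub_apply, Matrix.smul_apply, Matrix.one_apply]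
        | inr j =>
          have hij : i = j := Subsingleton.elim _ _
          subst hij
          simp [hT, Matrix.sub_apply, Matrix.smul_apply, Matrix.one_apply]
    rw [hxT]
    haveI hinst : Invertible (Matrix.diagonal fun s => x - lam s) :=
      ⟨Matrix.diagonal fun s => (x - lam s)⁻¹, by
        rw [Matrix.diagonal_mul_diagonal]
        rw [show (fun i => (x - lam i)⁻¹ * (x - lam i)) = fun _ => (1:ℝ) from
          funext fun i => inv_mul_cancel₀ (hxs i), Matrix.diagonal_one], by
        rw [Matrix.diagonal_mul_diagonal]
        rw [show (fun i => (x - lam i) * (x - lam i)⁻¹) = fun _ => (1:ℝ) from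
          funext fun i => mul_inv_cancel₀ (hxs i), Matrix.diagonal_one]⟩
    rw [Matrix.det_fromBlocks₁₁ (A := Matrix.diagonal fun s => x - lam s)]
    have hinv : ⅟(Matrix.diagonal fun s => x - lam s)
        = Matrix.diagonal fun s => (x - lam s)⁻¹ := by
      refine invOf_eq_right_inv ?_
      rw [Matrix.diagonal_mul_diagonal]
      rw [show (fun i => (x - lam i) * (x - lam i)⁻¹) = fun _ => (1:ℝ) from
        funext fun i => mul_inv_cancel₀ (hxs i), Matrix.diagonal_one]
    rw [hinv, Matrix.det_diagonal]
    have hent : ((Matrix.of fun (_ : Fin 1) _ => x - d)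
        - (Matrix.of fun (_ : Fin 1) j => -(c j)) * (Matrix.diagonal fun s => (x - lam s)⁻¹)
          * (Matrix.of fun i (_ : Fin 1) => -(c i))).det
        = (x - d) - ∑ s, (c s)^2 * (x - lam s)⁻¹ := by
      rw [Matrix.det_fin_one]
      simp only [Matrix.sub_apply, Matrix.mul_apply, Matrix.mul_diagonal, Matrix.of_apply]
      refine congrArg₂ Sub.sub rfl ?_
      refine Finset.sum_congr rfl fun s _ => ?_
      rw [Finset.sum_eq_single s]
      · rw [Matrix.diagonal_apply_eq]; ring
      · intro t _ hts; rw [Matrix.diagonal_apply_ne _ hts]; ring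
      · intro h; exact absurd (Finset.mem_univ s) h
    rw [hent]
    have expand : (∏ s, (x - lam s)) * ((x - d) - ∑ s, (c s)^2 * (x - lam s)⁻¹)
        = (x - d) * ∏ s, (x - lam s)
          - ∑ s, (c s)^2 * ∏ t ∈ Finset.univ.erase s, (x - lam t) := by
      rw [mul_sub, Finset.mul_sum]
      refine congrArg₂ Sub.sub (by ring) ?_
      refine Finset.sum_congr rfl fun s _ => ?_
      rw [← Finset.mul_prod_erase _ _ (Finset.mem_univ s)]
      calc ((x - lam s) * ∏ t ∈ Finset.univ.erase s, (x - lam t)) * ((c s)^2 * (x - lam s)⁻¹)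
          = (c s)^2 * (∏ t ∈ Finset.univ.erase s, (x - lam t)) * ((x - lam s) * (x - lam s)⁻¹) := by
            ring
        _ = (c s)^2 * ∏ t ∈ Finset.univ.erase s, (x - lam t) := by
            rw [mul_inv_cancel₀ (hxs s), mul_one]
    calc P.det * ((∏ s, (x - lam s)) * ((x - d) - ∑ s, (c s)^2 * (x - lam s)⁻¹)) * Pᵀ.det
        = ((∏ s, (x - lam s)) * ((x - d) - ∑ s, (c s)^2 * (x - lam s)⁻¹)) * (P.det * Pᵀ.det) := by
          ring
      _ = (x - d) * ∏ s, (x - lam s)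
          - ∑ s, (c s)^2 * ∏ t ∈ Finset.univ.erase s, (x - lam t) := by
          rw [hdP, mul_one, expand]
  -- now conclude polynomial identity
  have hinf : Set.Infinite {x : ℝ | A.charpoly.eval x
      = Polynomial.eval x ((X - C d) * ∏ s, (X - C (lam s))
        - ∑ s, C ((c s)^2) * ∏ t ∈ Finset.univ.erase s, (X - C (lam t)))} := by
    apply Set.Infinite.mono (s := (Set.range lam)ᶜ)
    · intro x hxr
      have hx : ∀ s, x ≠ lam s := fun s hxs => hxr ⟨s, hxs.symm⟩
      have := heval x hx
      simp only [Set.mem_setOf_eq, this]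
      simp [eval_prod, eval_finset_sum]
    · exact Set.Finite.infinite_compl (Set.finite_range lam)
  have := Polynomial.eq_of_infinite_eval_eq _ _ hinf
  simpa [hc, hd] using this

/-- Uniqueness of the inductive reconstruction step: two `(n+1) × (n+1)` real
symmetric matrices with the same top-left `n × n` principal submatrix `B` (which has
simple spectrum with orthonormal eigenvectors `v_r`), the same characteristic
polynomial (i.e. the same spectrum with multiplicity), spectrum disjoint from that of
`B`, and matching signs of the projections of the off-diagonal parts of their last
columns onto the `v_r`, are equal. -/
theorem inductive_step_unique {n : ℕ}
    (B : Matrix (Fin n) (Fin n) ℝ) (hBsymm : B.IsSymm)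
    (lam : Fin n → ℝ) (hlam : StrictMono lam)
    (v : Fin n → Fin n → ℝ)
    (heig : ∀ r, B.mulVec (v r) = lam r • v r)
    (hortho : ∀ r s, v r ⬝ᵥ v s = if r = s then 1 else 0)
    (A A' : Matrix (Fin (n + 1)) (Fin (n + 1)) ℝ)
    (hAsymm : A.IsSymm) (hA'symm : A'.IsSymm)
    (hsubA : A.submatrix Fin.castSucc Fin.castSucc = B)
    (hsubA' : A'.submatrix Fin.castSucc Fin.castSucc = B)
    (hchar : A.charpoly = A'.charpoly)
    (hdisj : ∀ μ : ℝ,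
      ((∃ w : Fin (n + 1) → ℝ, w ≠ 0 ∧ A.mulVec w = μ • w) ∨
        (∃ w : Fin (n + 1) → ℝ, w ≠ 0 ∧ A'.mulVec w = μ • w)) →
      ¬ ∃ u : Fin n → ℝ, u ≠ 0 ∧ B.mulVec u = μ • u)
    (a a' : Fin n → ℝ)
    (haA : ∀ j, a j = A j.castSucc (Fin.last n))
    (haA' : ∀ j, a' j = A' j.castSucc (Fin.last n))
    (hsign : ∀ r, 0 ≤ a ⬝ᵥ v r ↔ 0 ≤ a' ⬝ᵥ v r) :
    A = A' := by
  have hq := key_charpoly B lam v heig hortho A hAsymm hsubA a haA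
  have hq' := key_charpoly B lam v heig hortho A' hA'symm hsubA' a' haA'
  set d : ℝ := A (Fin.last n) (Fin.last n) with hdd
  set d' : ℝ := A' (Fin.last n) (Fin.last n) with hdd'
  have hpoly : (X - C d) * ∏ s, (X - C (lam s))
      - ∑ s, C ((a ⬝ᵥ v s)^2) * ∏ t ∈ Finset.univ.erase s, (X - C (lam t))
      = (X - C d') * ∏ s, (X - C (lam s))
      - ∑ s, C ((a' ⬝ᵥ v s)^2) * ∏ t ∈ Finset.univ.erase s, (X - C (lam t)) := by
    rw [← hq, ← hq', hchar]
  have hprodne : ∀ r : Fin n, (∏ t ∈ Finset.univ.erase r, (lam r - lam t)) ≠ 0 := by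
    intro r
    rw [Finset.prod_ne_zero_iff]
    intro t ht
    exact sub_ne_zero.mpr fun h => (Finset.mem_erase.mp ht).1 ((hlam.injective h).symm)
  have hsumeval : ∀ (r : Fin n) (f : Fin n → ℝ),
      (∑ s, f s * ∏ t ∈ Finset.univ.erase s, (lam r - lam t))
        = f r * ∏ t ∈ Finset.univ.erase r, (lam r - lam t) := by
    intro r f
    rw [Finset.sum_eq_single r]
    · intro s _ hsr
      have hmem : r ∈ Finset.univ.erase s := Finset.mem_erase.mpr ⟨fun h => hsr h.symm, Finset.mem_univ r⟩
      rw [Finset.prod_eq_zero hmem (sub_self (lam r)), mul_zero]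
    · intro h; exact absurd (Finset.mem_univ r) h
  have hsq : ∀ r, (a ⬝ᵥ v r)^2 = (a' ⬝ᵥ v r)^2 := by
    intro r
    have hev := congrArg (Polynomial.eval (lam r)) hpoly
    simp only [eval_sub, eval_mul, eval_prod, eval_finset_sum, eval_X, eval_C] at hev
    rw [Finset.prod_eq_zero (Finset.mem_univ r) (sub_self (lam r)), mul_zero,
      hsumeval r, hsumeval r] at hev
    simp only [mul_zero, zero_sub] at hev
    exact mul_right_cancel₀ (hprodne r) (neg_injective hev)
  have hcr : ∀ r, a ⬝ᵥ v r = a' ⬝ᵥ v r := by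
    intro r
    have h2 := hsq r
    by_cases h : 0 ≤ a ⬝ᵥ v r
    · have h' := (hsign r).1 h
      nlinarith [h2]
    · have h' : ¬ 0 ≤ a' ⬝ᵥ v r := fun hh => h ((hsign r).2 hh)
      push_neg at h h'
      nlinarith [h2]
  set V : Matrix (Fin n) (Fin n) ℝ := Matrix.of fun i j => v j i with hV
  have hVtV : Vᵀ * V = 1 := by
    ext i j
    have h := hortho i j
    simpa [Matrix.mul_apply, dotProduct, Matrix.one_apply, hV] using h
  have hVVt : V * Vᵀ = 1 := mul_eq_one_comm.mp hVtV
  have haa : a = a' := by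
    have h1 : Vᵀ.mulVec a = Vᵀ.mulVec a' := by
      funext s
      have := hcr s
      simpa [Matrix.mulVec, dotProduct, hV, mul_comm] using this
    calc a = (1 : Matrix (Fin n) (Fin n) ℝ).mulVec a := (Matrix.one_mulVec a).symm
      _ = V.mulVec (Vᵀ.mulVec a) := by rw [Matrix.mulVec_mulVec, hVVt]
      _ = V.mulVec (Vᵀ.mulVec a') := by rw [h1]
      _ = (1 : Matrix (Fin n) (Fin n) ℝ).mulVec a' := by rw [Matrix.mulVec_mulVec, hVVt]
      _ = a' := Matrix.one_mulVec a'
  have hsums : (∑ s, C ((a ⬝ᵥ v s)^2) * ∏ t ∈ Finset.univ.erase s, (X - C (lam t)))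
      = ∑ s, C ((a' ⬝ᵥ v s)^2) * ∏ t ∈ Finset.univ.erase s, (X - C (lam t)) := by
    refine Finset.sum_congr rfl fun s _ => by rw [hsq s]
  rw [hsums, sub_left_inj] at hpoly
  have hPne : (∏ s, (X - C (lam s)) : Polynomial ℝ) ≠ 0 :=
    (monic_prod_of_monic _ _ fun s _ => monic_X_sub_C _).ne_zero
  have hXd : (X - C d : Polynomial ℝ) = X - C d' := mul_right_cancel₀ hPne hpoly
  have hdeq : d = d' := by
    have := sub_right_injective hXd
    exact Polynomial.C_injective this
  ext i j
  induction i using Fin.lastCases with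
  | last =>
    induction j using Fin.lastCases with
    | last => exact hdeq
    | cast j =>
      rw [hAsymm.apply, hA'symm.apply, ← haA j, ← haA' j, haa]
  | cast i =>
    induction j using Fin.lastCases with
    | last => rw [← haA i, ← haA' i, haa]
    | cast j =>
      have h1 := congrFun (congrFun hsubA i) j
      have h2 := congrFun (congrFun hsubA' i) j
      simp only [Matrix.submatrix_apply] at h1 h2
      rw [h1, h2]
end

section
/- Let x_1, …, x_n and y_1, …, y_n be real numbers such that the x_i are pairwise distinct, the y_j are pairwise distinct, x_i ≠ y_j for all i, j, and all x_i are nonzero. Let C be the Cauchy matrix with entries C_{i,j} = 1/(x_i − y_j). Then Σ_{i,j=1}^{n} (C^{-1})_{i,j} · (1/x_j) = 1 − ( Π_{i=1}^{n} y_i ) / ( Π_{i=1}^{n} x_i ). -/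
open Matrix Finset Polynomial

lemma cauchyAux_det {n : ℕ} (x y : Fin n → ℝ)
    (hx : Function.Injective x) (hy : Function.Injective y)
    (hxy : ∀ i j, x i ≠ y j)
    (M : Matrix (Fin n) (Fin n) ℝ) (hM : ∀ i j, M i j = 1 / (x i - y j)) :
    M.det ≠ 0 := by
  intro hdet
  obtain ⟨v, hv0, hv⟩ := Matrix.exists_vecMul_eq_zero_iff.mpr hdet
  rcases Nat.eq_zero_or_pos n with hn | hn
  · exact hv0 (funext fun i => (hn ▸ i).elim0)
  set P : ℝ[X] := ∑ i, Polynomial.C (v i) * ∏ k ∈ univ.erase i, (Polynomial.C (x k) - X)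
    with hP
  have hsub : ∀ (i : Fin n) (j : Fin n), x i - y j ≠ 0 := fun i j => sub_ne_zero.mpr (hxy i j)
  have heval : ∀ j, P.eval (y j) = 0 := by
    intro j
    have hrow : ∑ i, v i / (x i - y j) = 0 := by
      have := congrFun hv j
      simpa [Matrix.vecMul, dotProduct, hM, div_eq_mul_inv] using this
    have : P.eval (y j) = (∑ i, v i / (x i - y j)) * ∏ k, (x k - y j) := by
      rw [Finset.sum_mul]
      simp only [hP, eval_finset_sum, eval_mul, eval_prod, eval_sub, eval_C, eval_X]
      refine Finset.sum_congr rfl fun i _ => ?_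
      rw [← Finset.mul_prod_erase univ (fun k => x k - y j) (mem_univ i)]
      rw [div_mul_eq_mul_div, eq_div_iff (hsub i j)]
      ring
    rw [this, hrow, zero_mul]
  have hdeg : P.natDegree < n := by
    have : P.natDegree ≤ n - 1 := by
      refine Polynomial.natDegree_sum_le_of_forall_le _ _ fun i _ => ?_
      refine Polynomial.natDegree_mul_le.trans ?_
      rw [Polynomial.natDegree_C, zero_add]
      refine (Polynomial.natDegree_prod_le _ _).trans ?_
      have h1 : ∀ k ∈ univ.erase i, (Polynomial.C (x k) - X).natDegree ≤ 1 := fun k _ => by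
        simpa using Polynomial.natDegree_sub_le (Polynomial.C (x k)) X
      have h2 := Finset.sum_le_card_nsmul (univ.erase i) _ 1 h1
      refine h2.trans ?_
      simp [Finset.card_erase_of_mem]
    omega
  have hP0 : P = 0 :=
    Polynomial.eq_zero_of_natDegree_lt_card_of_eval_eq_zero P hy heval
      (by simpa using hdeg)
  apply hv0
  funext i
  have hevalx : P.eval (x i) = v i * ∏ k ∈ univ.erase i, (x k - x i) := by
    simp only [hP, eval_finset_sum, eval_mul, eval_prod, eval_sub, eval_C, eval_X]
    refine Finset.sum_eq_single i (fun i' _ hne => ?_) (fun h => absurd (mem_univ i) h)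
    exact mul_eq_zero_of_right _ (Finset.prod_eq_zero (Finset.mem_erase.mpr ⟨(Ne.symm hne), mem_univ i⟩) (sub_self _))
  have hprodne : ∏ k ∈ univ.erase i, (x k - x i) ≠ 0 := by
    refine Finset.prod_ne_zero_iff.mpr fun k hk => sub_ne_zero.mpr ?_
    exact fun h => (Finset.mem_erase.mp hk).1 (hx h)
  have hvz : v i * ∏ k ∈ univ.erase i, (x k - x i) = 0 := by
    rw [← hevalx, hP0]; simp
  have hvi : v i = 0 := by
    rcases mul_eq_zero.mp hvz with h | h
    · exact h
    · exact absurd h hprodne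
  simpa using hvi

lemma cauchyAux_poly {n : ℕ} (x y : Fin n → ℝ)
    (hy : Function.Injective y) (hxy : ∀ i j, x i ≠ y j)
    (hy0 : ∀ j, y j ≠ 0) :
    (∏ i, (X - Polynomial.C (x i))) =
      Polynomial.C ((∏ i, x i) / (∏ i, y i)) * ∏ j, (X - Polynomial.C (y j)) +
      ∑ j, Polynomial.C ((∏ i, (y j - x i)) / (y j * ∏ k ∈ univ.erase j, (y j - y k)))
        * (X * ∏ k ∈ univ.erase j, (X - Polynomial.C (y k))) := by
  have hprody : (∏ i, y i) ≠ 0 := Finset.prod_ne_zero_iff.mpr fun i _ => hy0 i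
  have hyy : ∀ j, ∀ k ∈ univ.erase j, y j - y k ≠ 0 := fun j k hk =>
    sub_ne_zero.mpr fun h => (Finset.mem_erase.mp hk).1 (hy h.symm)
  have hden : ∀ j, y j * ∏ k ∈ univ.erase j, (y j - y k) ≠ 0 := fun j =>
    mul_ne_zero (hy0 j) (Finset.prod_ne_zero_iff.mpr (hyy j))
  set P : ℝ[X] := (∏ i, (X - Polynomial.C (x i))) -
      (Polynomial.C ((∏ i, x i) / (∏ i, y i)) * ∏ j, (X - Polynomial.C (y j)) +
      ∑ j, Polynomial.C ((∏ i, (y j - x i)) / (y j * ∏ k ∈ univ.erase j, (y j - y k)))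
        * (X * ∏ k ∈ univ.erase j, (X - Polynomial.C (y k)))) with hPdef
  have hP0 : P = 0 := by
    have h0mem : (0 : ℝ) ∉ univ.image y := by
      simp only [Finset.mem_image, Finset.mem_univ, true_and]
      rintro ⟨j, hj⟩; exact hy0 j hj
    refine Polynomial.eq_zero_of_natDegree_lt_card_of_eval_eq_zero' P
      (insert (0 : ℝ) (univ.image y)) ?_ ?_
    · intro t ht
      rcases Finset.mem_insert.mp ht with rfl | ht
      · -- eval at 0
        have h5 : P.eval 0 = (∏ i, (-(x i))) - (∏ i, x i) / (∏ i, y i) * ∏ j, (-(y j)) := by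
          simp [hPdef, eval_prod, eval_finset_sum]
        rw [h5, sub_eq_zero, div_mul_eq_mul_div, eq_comm, div_eq_iff hprody,
          ← Finset.prod_mul_distrib, ← Finset.prod_mul_distrib]
        exact Finset.prod_congr rfl fun i _ => by ring
      · obtain ⟨m, _, rfl⟩ := Finset.mem_image.mp ht
        have h2 : ∏ j, (y m - y j) = 0 := Finset.prod_eq_zero (mem_univ m) (sub_self _)
        have h3 : ∑ j, (∏ i, (y j - x i)) / (y j * ∏ k ∈ univ.erase j, (y j - y k))
              * (y m * ∏ k ∈ univ.erase j, (y m - y k)) = ∏ i, (y m - x i) := by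
          rw [Finset.sum_eq_single_of_mem m (mem_univ m)]
          · exact div_mul_cancel₀ _ (hden m)
          · intro j _ hjm
            exact mul_eq_zero_of_right _ (mul_eq_zero_of_right _
              (Finset.prod_eq_zero (Finset.mem_erase.mpr ⟨Ne.symm hjm, mem_univ m⟩) (sub_self _)))
        simp only [hPdef, eval_sub, eval_add, eval_mul, eval_C, eval_finset_sum, eval_prod,
          eval_X, h2, mul_zero, zero_add]
        rw [h3, sub_self]
    · have hd1 : (∏ i, (X - Polynomial.C (x i)) : ℝ[X]).natDegree ≤ n := by
        refine (Polynomial.natDegree_prod_le _ _).trans ?_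
        have := Finset.sum_le_card_nsmul (univ : Finset (Fin n)) _ 1
          (fun i _ => (Polynomial.natDegree_X_sub_C (x i)).le)
        simpa using this
      have hd2 : (Polynomial.C ((∏ i, x i) / (∏ i, y i)) *
          ∏ j, (X - Polynomial.C (y j)) : ℝ[X]).natDegree ≤ n := by
        refine Polynomial.natDegree_mul_le.trans ?_
        rw [Polynomial.natDegree_C, zero_add]
        refine (Polynomial.natDegree_prod_le _ _).trans ?_
        have := Finset.sum_le_card_nsmul (univ : Finset (Fin n)) _ 1
          (fun j _ => (Polynomial.natDegree_X_sub_C (y j)).le)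
        simpa using this
      have hd3 : (∑ j, Polynomial.C ((∏ i, (y j - x i)) / (y j * ∏ k ∈ univ.erase j, (y j - y k)))
          * (X * ∏ k ∈ univ.erase j, (X - Polynomial.C (y k))) : ℝ[X]).natDegree ≤ n := by
        refine Polynomial.natDegree_sum_le_of_forall_le _ _ fun j _ => ?_
        refine Polynomial.natDegree_mul_le.trans ?_
        rw [Polynomial.natDegree_C, zero_add]
        refine Polynomial.natDegree_mul_le.trans ?_
        rw [Polynomial.natDegree_X]
        have h1 : (∏ k ∈ univ.erase j, (X - Polynomial.C (y k)) : ℝ[X]).natDegree ≤ n - 1 := by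
          refine (Polynomial.natDegree_prod_le _ _).trans ?_
          have := Finset.sum_le_card_nsmul (univ.erase j) _ 1
            (fun k _ => (Polynomial.natDegree_X_sub_C (y k)).le)
          simpa [Finset.card_erase_of_mem] using this
        have : 0 < n := j.pos
        omega
      have hcard : (insert (0 : ℝ) (univ.image y)).card = n + 1 := by
        rw [Finset.card_insert_of_notMem h0mem, Finset.card_image_of_injective _ hy]
        simp
      have : P.natDegree ≤ n := by
        refine (Polynomial.natDegree_sub_le _ _).trans ?_
        exact max_le hd1 ((Polynomial.natDegree_add_le _ _).trans (max_le hd2 hd3))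
      omega
  exact sub_eq_zero.mp (hPdef ▸ hP0)

theorem cauchyAux_main {n : ℕ} (x y : Fin n → ℝ)
    (hx : Function.Injective x) (hy : Function.Injective y)
    (hxy : ∀ i j, x i ≠ y j) (hx0 : ∀ i, x i ≠ 0)
    (M : Matrix (Fin n) (Fin n) ℝ) (hM : ∀ i j, M i j = 1 / (x i - y j))
    (hunit : IsUnit M.det)
    (hpoly : ∀ (hy0 : ∀ j, y j ≠ 0), (∏ i, (X - Polynomial.C (x i))) =
      Polynomial.C ((∏ i, x i) / (∏ i, y i)) * ∏ j, (X - Polynomial.C (y j)) +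
      ∑ j, Polynomial.C ((∏ i, (y j - x i)) / (y j * ∏ k ∈ univ.erase j, (y j - y k)))
        * (X * ∏ k ∈ univ.erase j, (X - Polynomial.C (y k)))) :
    ∑ i, ∑ j, M⁻¹ i j * (1 / x j) = 1 - (∏ i, y i) / (∏ i, x i) := by
  by_cases h0 : ∃ m, y m = 0
  · obtain ⟨m, hm⟩ := h0
    have hprody : (∏ i, y i) = 0 := Finset.prod_eq_zero (mem_univ m) hm
    have hL : ∑ i, ∑ j, M⁻¹ i j * (1 / x j) = ∑ i, (M⁻¹ * M) i m := by
      refine Finset.sum_congr rfl fun i _ => ?_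
      rw [Matrix.mul_apply]
      refine Finset.sum_congr rfl fun j _ => ?_
      rw [hM, hm, sub_zero]
    rw [hL, Matrix.nonsing_inv_mul M hunit, hprody]
    simp [Matrix.one_apply]
  · push_neg at h0
    have hy0 : ∀ j, y j ≠ 0 := h0
    have hprodx : (∏ i, x i) ≠ 0 := Finset.prod_ne_zero_iff.mpr fun i _ => hx0 i
    have hprody : (∏ i, y i) ≠ 0 := Finset.prod_ne_zero_iff.mpr fun i _ => hy0 i
    set a : ℝ := (∏ i, x i) / (∏ i, y i) with ha
    have ha0 : a ≠ 0 := div_ne_zero hprodx hprody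
    set b : Fin n → ℝ := fun j =>
      (∏ i, (y j - x i)) / (y j * ∏ k ∈ univ.erase j, (y j - y k)) with hb
    have hid := hpoly hy0
    -- coefficient n identity : 1 = a + ∑ b
    have hcoef : (1 : ℝ) = a + ∑ j, b j := by
      have hmx : (∏ i, (X - Polynomial.C (x i)) : ℝ[X]).Monic :=
        monic_prod_of_monic _ _ fun i _ => monic_X_sub_C _
      have hdx : (∏ i, (X - Polynomial.C (x i)) : ℝ[X]).natDegree = n := by
        rw [Polynomial.natDegree_prod _ _ fun i _ => X_sub_C_ne_zero (x i)]
        simp [Polynomial.natDegree_X_sub_C]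
      have hmy : (∏ j, (X - Polynomial.C (y j)) : ℝ[X]).Monic :=
        monic_prod_of_monic _ _ fun j _ => monic_X_sub_C _
      have hdy : (∏ j, (X - Polynomial.C (y j)) : ℝ[X]).natDegree = n := by
        rw [Polynomial.natDegree_prod _ _ fun j _ => X_sub_C_ne_zero (y j)]
        simp [Polynomial.natDegree_X_sub_C]
      have hcx : (∏ i, (X - Polynomial.C (x i)) : ℝ[X]).coeff n = 1 := by
        have := hmx.coeff_natDegree; rwa [hdx] at this
      have hcy : (∏ j, (X - Polynomial.C (y j)) : ℝ[X]).coeff n = 1 := by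
        have := hmy.coeff_natDegree; rwa [hdy] at this
      have hcj : ∀ j : Fin n,
          (X * ∏ k ∈ univ.erase j, (X - Polynomial.C (y k)) : ℝ[X]).coeff n = 1 := by
        intro j
        have hme : (∏ k ∈ univ.erase j, (X - Polynomial.C (y k)) : ℝ[X]).Monic :=
          monic_prod_of_monic _ _ fun k _ => monic_X_sub_C _
        have hde : (∏ k ∈ univ.erase j, (X - Polynomial.C (y k)) : ℝ[X]).natDegree = n - 1 := by
          rw [Polynomial.natDegree_prod _ _ fun k _ => X_sub_C_ne_zero (y k)]
          simp [Polynomial.natDegree_X_sub_C, Finset.card_erase_of_mem]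
        have hmm : (X * ∏ k ∈ univ.erase j, (X - Polynomial.C (y k)) : ℝ[X]).Monic :=
          monic_X.mul hme
        have hdd : (X * ∏ k ∈ univ.erase j, (X - Polynomial.C (y k)) : ℝ[X]).natDegree = n := by
          rw [monic_X.natDegree_mul hme, Polynomial.natDegree_X, hde]
          have := j.pos
          omega
        have := hmm.coeff_natDegree; rwa [hdd] at this
      have := congrArg (fun p : ℝ[X] => p.coeff n) hid
      simpa [hcx, hcy, hcj, Polynomial.coeff_C_mul, Polynomial.finset_sum_coeff] using this
    -- row identity
    set w : Fin n → ℝ := fun j => -(b j) / a with hw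
    have hrow : ∀ i, ∑ j, (1 / (x i - y j)) * w j = 1 / x i := by
      intro i
      have hsubne : ∀ j, x i - y j ≠ 0 := fun j => sub_ne_zero.mpr (hxy i j)
      have hprodne : (∏ j, (x i - y j)) ≠ 0 := Finset.prod_ne_zero_iff.mpr fun j _ => hsubne j
      have hE := congrArg (Polynomial.eval (x i)) hid
      simp only [eval_prod, eval_sub, eval_X, eval_C, eval_add, eval_mul, eval_finset_sum] at hE
      have hz : ∏ k, (x i - x k) = (0 : ℝ) :=
        Finset.prod_eq_zero (mem_univ i) (sub_self (x i))
      rw [hz] at hE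
      -- hE : 0 = a * ∏ j, (x i - y j) + ∑ j, b j * (x i * ∏ k ∈ erase j, (x i - y k))
      have hcancel : ∀ c : ℝ, c * (a * (x i * ∏ j, (x i - y j))) =
          (1 / x i) * (a * (x i * ∏ j, (x i - y j))) → c = 1 / x i :=
        fun c h => mul_right_cancel₀ (mul_ne_zero ha0 (mul_ne_zero (hx0 i) hprodne)) h
      refine hcancel _ ?_
      rw [Finset.sum_mul]
      have hterm : ∀ j : Fin n, (1 / (x i - y j)) * w j * (a * (x i * ∏ j, (x i - y j)))
          = -(b j) * (x i * ∏ k ∈ univ.erase j, (x i - y k)) := by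
        intro j
        have h1 : (x i - y j) * (1 / (x i - y j)) = 1 := by
          rw [mul_one_div, div_self (hsubne j)]
        have h2 : a * (1 / a) = 1 := by rw [mul_one_div, div_self ha0]
        rw [← Finset.mul_prod_erase univ (fun k => x i - y k) (mem_univ j)]
        calc 1 / (x i - y j) * w j *
              (a * (x i * ((x i - y j) * ∏ k ∈ univ.erase j, (x i - y k))))
            = -(b j) * (x i * ∏ k ∈ univ.erase j, (x i - y k)) *
              ((x i - y j) * (1 / (x i - y j))) * (a * (1 / a)) := by rw [hw]; ring
          _ = -(b j) * (x i * ∏ k ∈ univ.erase j, (x i - y k)) := by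
              rw [h1, h2, mul_one, mul_one]
      rw [Finset.sum_congr rfl fun j _ => hterm j]
      have hsum : ∑ j, -(b j) * (x i * ∏ k ∈ univ.erase j, (x i - y k))
          = a * ∏ j, (x i - y j) := by
        have : ∑ j, b j * (x i * ∏ k ∈ univ.erase j, (x i - y k))
            = -(a * ∏ j, (x i - y j)) := by linarith [hE]
        calc ∑ j, -(b j) * (x i * ∏ k ∈ univ.erase j, (x i - y k))
            = -∑ j, b j * (x i * ∏ k ∈ univ.erase j, (x i - y k)) := by
              rw [← Finset.sum_neg_distrib]
              exact Finset.sum_congr rfl fun j _ => by ring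
          _ = a * ∏ j, (x i - y j) := by rw [this, neg_neg]
      rw [hsum]
      field_simp
      rw [div_self (hx0 i)]
    -- mulVec
    have hCw : M.mulVec w = fun i => 1 / x i := by
      funext i
      rw [Matrix.mulVec, dotProduct]
      rw [Finset.sum_congr rfl fun j _ => by rw [hM i j]]
      exact hrow i
    have hsol : M⁻¹.mulVec (fun j => 1 / x j) = w := by
      rw [← hCw, Matrix.mulVec_mulVec, Matrix.nonsing_inv_mul M hunit, Matrix.one_mulVec]
    have hL : ∑ i, ∑ j, M⁻¹ i j * (1 / x j) = ∑ i, w i := by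
      refine Finset.sum_congr rfl fun i _ => ?_
      have := congrFun hsol i
      rw [Matrix.mulVec, dotProduct] at this
      exact this
    rw [hL]
    have hsb : ∑ j, b j = 1 - a := by linarith [hcoef]
    have hsw : ∑ i, w i = (a - 1) / a := by
      calc ∑ i, w i = ∑ i, -(b i) / a := rfl
        _ = (∑ i, -(b i)) / a := by rw [Finset.sum_div]
        _ = (-(∑ i, b i)) / a := by rw [Finset.sum_neg_distrib]
        _ = (a - 1) / a := by rw [hsb]; ring_nf
    rw [hsw, ha]
    field_simp

/-- Cauchy matrix identity: with `C_{i,j} = 1/(x_i − y_j)`,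
`Σ_{i,j} (C⁻¹)_{i,j} (1/x_j) = 1 − (Π y_i)/(Π x_i)`. -/
theorem cauchy_inv_sum_one_over_x {n : ℕ} (x y : Fin n → ℝ)
    (hx : Function.Injective x) (hy : Function.Injective y)
    (hxy : ∀ i j, x i ≠ y j) (hx0 : ∀ i, x i ≠ 0)
    (C : Matrix (Fin n) (Fin n) ℝ) (hC : ∀ i j, C i j = 1 / (x i - y j)) :
    ∑ i, ∑ j, C⁻¹ i j * (1 / x j) = 1 - (∏ i, y i) / (∏ i, x i) := by
  have hdet := cauchyAux_det x y hx hy hxy C hC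
  exact cauchyAux_main x y hx hy hxy hx0 C hC (isUnit_iff_ne_zero.mpr hdet)
    (fun hy0 => cauchyAux_poly x y hy hxy hy0)
end

section
/- Let x_1, …, x_n and y_1, …, y_n be real numbers such that the x_i are pairwise distinct, the y_j are pairwise distinct, x_i ≠ y_j for all i, j, and all x_i are nonzero. Let C be the Cauchy matrix with entries C_{i,j} = 1/(x_i − y_j). Then Σ_{i,j=1}^{n} y_i · (C^{-1})_{i,j} · (1/x_j) = ( ( Π_{i=1}^{n} y_i ) / ( Π_{i=1}^{n} x_i ) ) · Σ_{j=1}^{n} (x_j − y_j). -/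
open Matrix Finset

section AuxLemmas
open Polynomial

lemma my_eval0 {n : ℕ} (y : Fin n → ℝ) (hy : Function.Injective y) (f : ℝ[X])
    (hf : f.degree < n) :
    f.eval 0 = ∑ j, f.eval (y j) *
      ((∏ k ∈ univ.erase j, (y j - y k)⁻¹) * ∏ k ∈ univ.erase j, (0 - y k)) := by
  have hinj : Set.InjOn y (univ : Finset (Fin n)) := hy.injOn
  have hdeg : f.degree < (#(univ : Finset (Fin n)) : ℕ) := by simpa using hf
  conv_lhs => rw [Lagrange.eq_interpolate hinj hdeg]
  rw [Lagrange.interpolate_apply, eval_finset_sum]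
  refine Finset.sum_congr rfl fun j _ => ?_
  rw [eval_mul, eval_C, Lagrange.basis, eval_prod]
  congr 1
  rw [← Finset.prod_mul_distrib]
  refine Finset.prod_congr rfl fun k _ => ?_
  simp [Lagrange.basisDivisor]

lemma my_coeff {n : ℕ} (y : Fin n → ℝ) (hy : Function.Injective y) (hn : 0 < n) (f : ℝ[X])
    (hf : f.degree < n) :
    f.coeff (n - 1) = ∑ j, f.eval (y j) * ∏ k ∈ univ.erase j, (y j - y k)⁻¹ := by
  have hinj : Set.InjOn y (univ : Finset (Fin n)) := hy.injOn
  have hdeg : f.degree < (#(univ : Finset (Fin n)) : ℕ) := by simpa using hf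
  conv_lhs => rw [Lagrange.eq_interpolate hinj hdeg]
  rw [Lagrange.interpolate_apply, finset_sum_coeff]
  refine Finset.sum_congr rfl fun j _ => ?_
  rw [coeff_C_mul]
  congr 1
  have hb : Lagrange.basis univ y j =
      C (∏ k ∈ univ.erase j, (y j - y k)⁻¹) * Lagrange.nodal (univ.erase j) y := by
    rw [Lagrange.basis, Lagrange.nodal, map_prod, ← Finset.prod_mul_distrib]
    exact Finset.prod_congr rfl fun k _ => rfl
  rw [hb, coeff_C_mul]
  have hcard : #((univ : Finset (Fin n)).erase j) = n - 1 := by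
    rw [Finset.card_erase_of_mem (Finset.mem_univ j)]; simp
  have : (Lagrange.nodal ((univ : Finset (Fin n)).erase j) y).coeff (n-1) = 1 := by
    have hm : (Lagrange.nodal ((univ : Finset (Fin n)).erase j) y).Monic := Lagrange.nodal_monic
    have hnd : (Lagrange.nodal ((univ : Finset (Fin n)).erase j) y).natDegree = n - 1 := by
      rw [Lagrange.natDegree_nodal, hcard]
    rw [← hnd]; exact hm.coeff_natDegree
  rw [this, mul_one]

lemma prod_zero_sub {n : ℕ} (s : Finset (Fin n)) (f : Fin n → ℝ) :
    ∏ k ∈ s, (0 - f k) = (-1 : ℝ) ^ #s * ∏ k ∈ s, f k := by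
  rw [← Finset.prod_const, ← Finset.prod_mul_distrib]
  exact Finset.prod_congr rfl fun k _ => by ring

-- I1
lemma my_I1 {n : ℕ} (x y : Fin n → ℝ)
    (hx : Function.Injective x) (hy : Function.Injective y) (i : Fin n) :
    ∏ l ∈ univ.erase i, x l =
      ∑ j, (∏ l ∈ univ.erase i, (y j - x l)) * (∏ m ∈ univ.erase j, y m) *
        ∏ k ∈ univ.erase j, (y j - y k)⁻¹ := by
  have hn : 0 < n := i.pos
  have hcard : ∀ j : Fin n, #((univ : Finset (Fin n)).erase j) = n - 1 := fun j => by
    rw [Finset.card_erase_of_mem (Finset.mem_univ j)]; simp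
  set f : ℝ[X] := Lagrange.nodal (univ.erase i) x with hf
  have hdeg : f.degree < n := by
    rw [hf, Lagrange.degree_nodal, hcard]
    exact_mod_cast Nat.sub_lt hn one_pos
  have h := my_eval0 y hy f hdeg
  simp only [hf, Lagrange.eval_nodal] at h
  rw [prod_zero_sub, hcard] at h
  have h' : ∀ j : Fin n, (∏ l ∈ univ.erase i, (y j - x l)) *
      ((∏ k ∈ univ.erase j, (y j - y k)⁻¹) * ∏ k ∈ univ.erase j, (0 - y k)) =
      (-1:ℝ)^(n-1) * ((∏ l ∈ univ.erase i, (y j - x l)) * (∏ m ∈ univ.erase j, y m) *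
        ∏ k ∈ univ.erase j, (y j - y k)⁻¹) := by
    intro j
    rw [prod_zero_sub, hcard]
    ring
  rw [Finset.sum_congr rfl fun j _ => h' j, ← Finset.mul_sum] at h
  have hne : ((-1:ℝ)^(n-1)) ≠ 0 := by
    simp
  exact mul_left_cancel₀ hne h

-- I2
lemma my_I2 {n : ℕ} (x y : Fin n → ℝ)
    (hx : Function.Injective x) (hy : Function.Injective y) (hn : 0 < n) :
    ∑ j, (∏ l, (y j - x l)) * ∏ k ∈ univ.erase j, (y j - y k)⁻¹ =
      (∑ j, y j) - ∑ j, x j := by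
  set f : ℝ[X] := Lagrange.nodal univ x - Lagrange.nodal univ y with hf
  have hcu : #(univ : Finset (Fin n)) = n := by simp
  have hdeg : f.degree < n := by
    rw [hf]
    have := Polynomial.degree_sub_lt (p := Lagrange.nodal (univ : Finset (Fin n)) x)
      (q := Lagrange.nodal univ y)
      (by rw [Lagrange.degree_nodal, Lagrange.degree_nodal])
      Lagrange.nodal_ne_zero
      (by rw [Lagrange.nodal_monic.leadingCoeff, Lagrange.nodal_monic.leadingCoeff])
    rw [Lagrange.degree_nodal, hcu] at this
    exact this
  have h := my_coeff y hy hn f hdeg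
  have hev : ∀ j, f.eval (y j) = ∏ l, (y j - x l) := by
    intro j
    rw [hf, eval_sub, Lagrange.eval_nodal, Lagrange.eval_nodal_at_node (Finset.mem_univ j),
      sub_zero]
  rw [Finset.sum_congr rfl (fun j _ => by rw [hev j])] at h
  rw [← h, hf, coeff_sub]
  have hcx : (Lagrange.nodal (univ : Finset (Fin n)) x).coeff (n-1) = -∑ j, x j := by
    have := Polynomial.prod_X_sub_C_coeff_card_pred (univ : Finset (Fin n)) x (by simpa using hn)
    rw [hcu] at this
    rw [Lagrange.nodal_eq]; exact this
  have hcy : (Lagrange.nodal (univ : Finset (Fin n)) y).coeff (n-1) = -∑ j, y j := by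
    have := Polynomial.prod_X_sub_C_coeff_card_pred (univ : Finset (Fin n)) y (by simpa using hn)
    rw [hcu] at this
    rw [Lagrange.nodal_eq]; exact this
  rw [hcx, hcy]; ring


lemma my_ker {n : ℕ} (x y : Fin n → ℝ)
    (hx : Function.Injective x) (hy : Function.Injective y)
    (hxy : ∀ i j, x i ≠ y j)
    (C : Matrix (Fin n) (Fin n) ℝ) (hC : ∀ i j, C i j = 1 / (x i - y j))
    (c : Fin n → ℝ) (hc : C.mulVec c = 0) : c = 0 := by
  rcases Nat.eq_zero_or_pos n with hn | hn
  · subst hn; ext i; exact absurd i.2 (by simp)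
  set N : ℝ[X] := ∑ j, Polynomial.C (c j) * Lagrange.nodal (univ.erase j) y with hN
  have hcard : ∀ j : Fin n, #((univ : Finset (Fin n)).erase j) = n - 1 := fun j => by
    rw [Finset.card_erase_of_mem (Finset.mem_univ j)]; simp
  have hdeg : N.degree < n := by
    refine lt_of_le_of_lt (Polynomial.degree_sum_le _ _) ?_
    rw [Finset.sup_lt_iff (by exact_mod_cast WithBot.bot_lt_coe n)]
    intro j _
    refine lt_of_le_of_lt (degree_mul_le _ _) ?_
    have h1 : (Polynomial.C (c j)).degree ≤ 0 := degree_C_le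
    have h2 : (Lagrange.nodal ((univ : Finset (Fin n)).erase j) y).degree = ((n-1 : ℕ) : WithBot ℕ) := by
      rw [Lagrange.degree_nodal, hcard]
    calc (Polynomial.C (c j)).degree + (Lagrange.nodal ((univ : Finset (Fin n)).erase j) y).degree
        ≤ 0 + ((n-1:ℕ) : WithBot ℕ) := add_le_add h1 (le_of_eq h2)
      _ = ((n-1:ℕ) : WithBot ℕ) := zero_add _
      _ < (n : WithBot ℕ) := by exact_mod_cast Nat.sub_lt hn one_pos
  have hevx : ∀ i, N.eval (x i) = 0 := by
    intro i
    have hci : ∑ j, C i j * c j = 0 := congrFun hc i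
    have : N.eval (x i) = ∑ j, c j * ∏ k ∈ univ.erase j, (x i - y k) := by
      simp [hN, eval_finset_sum, Lagrange.eval_nodal]
    rw [this]
    have key : ∀ j, c j * ∏ k ∈ univ.erase j, (x i - y k) =
        (∏ k, (x i - y k)) * (C i j * c j) := by
      intro j
      have hne : x i - y j ≠ 0 := sub_ne_zero_of_ne (hxy i j)
      rw [hC, ← Finset.mul_prod_erase _ _ (Finset.mem_univ j)]
      field_simp
    rw [Finset.sum_congr rfl fun j _ => key j, ← Finset.mul_sum, hci, mul_zero]
  have hN0 : N = 0 := by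
    refine Polynomial.eq_zero_of_degree_lt_of_eval_index_eq_zero
      (univ : Finset (Fin n)) hx.injOn (by simpa using hdeg) fun i _ => hevx i
  ext j
  have := congrArg (Polynomial.eval (y j)) hN0
  rw [hN] at this
  simp only [eval_finset_sum, eval_mul, eval_C, Lagrange.eval_nodal, eval_zero] at this
  rw [Finset.sum_eq_single j] at this
  · have hne : ∏ k ∈ univ.erase j, (y j - y k) ≠ 0 := by
      refine Finset.prod_ne_zero_iff.mpr fun k hk => sub_ne_zero_of_ne (hy.ne ?_)
      exact fun h => (Finset.mem_erase.mp hk).1 h.symm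
    have := mul_eq_zero.mp this
    simpa [hne] using this
  · intro m _ hm
    have : ∏ k ∈ univ.erase m, (y j - y k) = 0 := by
      refine Finset.prod_eq_zero (Finset.mem_erase.mpr ⟨fun h => hm h.symm, Finset.mem_univ j⟩) ?_
      simp
    rw [this, mul_zero]
  · intro h; exact absurd (Finset.mem_univ j) h

end AuxLemmas

/-- Cauchy matrix identity: with `C_{i,j} = 1/(x_i − y_j)`,
`Σ_{i,j} y_i (C⁻¹)_{i,j} (1/x_j) = ((Π y_i)/(Π x_i)) Σ_j (x_j − y_j)`. -/
theorem cauchy_inv_weighted_sum {n : ℕ} (x y : Fin n → ℝ)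
    (hx : Function.Injective x) (hy : Function.Injective y)
    (hxy : ∀ i j, x i ≠ y j) (hx0 : ∀ i, x i ≠ 0)
    (C : Matrix (Fin n) (Fin n) ℝ) (hC : ∀ i j, C i j = 1 / (x i - y j)) :
    ∑ i, ∑ j, y i * (C⁻¹ i j * (1 / x j)) =
      ((∏ i, y i) / (∏ i, x i)) * ∑ j, (x j - y j) := by
  rcases Nat.eq_zero_or_pos n with hn | hn
  · subst hn; simp
  set w : Fin n → ℝ := fun j => ∏ k ∈ univ.erase j, (y j - y k)⁻¹ with hw
  set a : Fin n → ℝ := fun j =>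
    (∏ l, x l)⁻¹ * (-(∏ l, (y j - x l)) * (∏ m ∈ univ.erase j, y m) * w j) with ha
  have hPx : (∏ l, x l) ≠ 0 := Finset.prod_ne_zero_iff.mpr fun l _ => hx0 l
  have hS1 : ∀ i, ∑ j, C i j * a j = 1 / x i := by
    intro i
    have key : ∀ j, C i j * a j = (∏ l, x l)⁻¹ *
        ((∏ l ∈ univ.erase i, (y j - x l)) * (∏ m ∈ univ.erase j, y m) * w j) := by
      intro j
      have hxiyj : x i - y j ≠ 0 := sub_ne_zero_of_ne (hxy i j)
      have hsplit : -(∏ l, (y j - x l)) =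
          (x i - y j) * ∏ l ∈ univ.erase i, (y j - x l) := by
        rw [← Finset.mul_prod_erase _ _ (Finset.mem_univ i)]; ring
      rw [hC, ha]
      dsimp only
      rw [hsplit]
      field_simp
    rw [Finset.sum_congr rfl fun j _ => key j, ← Finset.mul_sum, ← my_I1 x y hx hy i]
    have hsplitx : (∏ l, x l) = x i * ∏ l ∈ univ.erase i, x l :=
      (Finset.mul_prod_erase _ _ (Finset.mem_univ i)).symm
    have hQ : (∏ l ∈ univ.erase i, x l) ≠ 0 :=
      Finset.prod_ne_zero_iff.mpr fun l _ => hx0 l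
    rw [hsplitx]
    field_simp
  have hCa : C.mulVec a = fun j => 1 / x j := by
    funext i
    simpa [Matrix.mulVec, dotProduct] using hS1 i
  have hinj : Function.Injective C.mulVec := by
    intro u v huv
    have h0 : C.mulVec (u - v) = 0 := by
      rw [Matrix.mulVec_sub, huv, sub_self]
    have := my_ker x y hx hy hxy C hC (u - v) h0
    exact sub_eq_zero.mp this
  have hUnit : IsUnit C := Matrix.mulVec_injective_iff_isUnit.mp hinj
  have hinv : C⁻¹.mulVec (fun j => 1 / x j) = a := by
    rw [← hCa, Matrix.mulVec_mulVec,
      Matrix.nonsing_inv_mul C ((Matrix.isUnit_iff_isUnit_det C).mp hUnit), Matrix.one_mulVec]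
  have hLHS : ∑ i, ∑ j, y i * (C⁻¹ i j * (1 / x j)) = ∑ i, y i * a i := by
    refine Finset.sum_congr rfl fun i _ => ?_
    rw [← Finset.mul_sum]
    congr 1
    have := congrFun hinv i
    simpa [Matrix.mulVec, dotProduct] using this
  rw [hLHS]
  have hterm : ∀ j, y j * a j =
      -((∏ l, x l)⁻¹ * (∏ m, y m)) * ((∏ l, (y j - x l)) * w j) := by
    intro j
    have hy' : (∏ m, y m) = y j * ∏ m ∈ univ.erase j, y m :=
      (Finset.mul_prod_erase _ _ (Finset.mem_univ j)).symm
    rw [ha]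
    dsimp only
    rw [hy']
    ring
  rw [Finset.sum_congr rfl fun j _ => hterm j, ← Finset.mul_sum, my_I2 x y hx hy hn,
    Finset.sum_sub_distrib]
  ring
end

section
/- Vandermonde decomposition of the Cauchy matrix: let x_1, …, x_n be pairwise distinct reals and y_1, …, y_n be reals with x_i ≠ y_j for all i, j. Define p(t) = Π_{i=1}^{n}(t − x_i) and p_k(t) = Π_{i=1, i≠k}^{n}(t − x_i), and set P = diag(p_1(x_1), …, p_n(x_n)), Q = diag(p(y_1), …, p(y_n)). Let V_x and V_y be the Vandermonde matrices with entries (V_x)_{i,j} = x_j^{i−1} and (V_y)_{i,j} = y_j^{i−1}. If additionally the y_j are pairwise distinct (so Q and V_y are invertible; P and V_x are invertible since the x_i are distinct and x_i ≠ y_j), then the Cauchy matrix C with C_{i,j} = 1/(x_i − y_j) satisfies C = −P · V_x^{-1} · V_y · Q^{-1}. -/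
open Matrix Finset Polynomial

/-- The key Lagrange interpolation identity. -/
lemma lagrange_sum {n : ℕ} (x : Fin n → ℝ) (hx : Function.Injective x)
    (i : Fin n) (t : ℝ) :
    ∑ k, x k ^ (i : ℕ) *
      ((∏ m ∈ Finset.univ.erase k, (x k - x m))⁻¹ *
        ∏ m ∈ Finset.univ.erase k, (t - x m)) = t ^ (i : ℕ) := by
  have hinj : Set.InjOn x (Finset.univ : Finset (Fin n)) := hx.injOn
  have hdeg : (Polynomial.X ^ (i : ℕ) : ℝ[X]).degree < (Finset.univ : Finset (Fin n)).card := by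
    rw [Polynomial.degree_X_pow, Finset.card_univ, Fintype.card_fin]
    exact_mod_cast i.isLt
  have h := Lagrange.eq_interpolate (f := (Polynomial.X ^ (i : ℕ) : ℝ[X])) hinj hdeg
  have h2 := congrArg (Polynomial.eval t) h
  rw [Polynomial.eval_pow, Polynomial.eval_X, Lagrange.interpolate_apply,
    Polynomial.eval_finset_sum] at h2
  rw [h2]
  refine Finset.sum_congr rfl fun k _ => ?_
  rw [Polynomial.eval_mul, Polynomial.eval_C, Polynomial.eval_pow, Polynomial.eval_X,
    Lagrange.basis, Polynomial.eval_prod]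
  congr 1
  rw [← Finset.prod_inv_distrib, ← Finset.prod_mul_distrib]
  refine Finset.prod_congr rfl fun m _ => ?_
  rw [Lagrange.basisDivisor, Polynomial.eval_mul, Polynomial.eval_C, Polynomial.eval_sub,
    Polynomial.eval_X, Polynomial.eval_C]

/-- Vandermonde decomposition of the Cauchy matrix: `C = −P · V_x⁻¹ · V_y · Q⁻¹`,
where `P = diag(p₁(x₁),…,pₙ(xₙ))`, `Q = diag(p(y₁),…,p(yₙ))` with
`p(t) = Π_i (t − x_i)`, `p_k(t) = Π_{i≠k} (t − x_i)`, and
`(V_x)_{i,j} = x_j^{i−1}`, `(V_y)_{i,j} = y_j^{i−1}`. -/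
theorem cauchy_vandermonde_decomposition {n : ℕ} (x y : Fin n → ℝ)
    (hx : Function.Injective x) (hy : Function.Injective y)
    (hxy : ∀ i j, x i ≠ y j) :
    (Matrix.of fun i j : Fin n => 1 / (x i - y j)) =
      -((Matrix.diagonal fun k => ∏ i ∈ Finset.univ.erase k, (x k - x i)) *
        (Matrix.of fun i j : Fin n => x j ^ (i : ℕ))⁻¹ *
        (Matrix.of fun i j : Fin n => y j ^ (i : ℕ)) *
        (Matrix.diagonal fun k => ∏ i, (y k - x i))⁻¹) := by
  -- nonvanishing facts
  have hP : ∀ k, (∏ i ∈ Finset.univ.erase k, (x k - x i)) ≠ 0 := fun k =>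
    Finset.prod_ne_zero_iff.mpr fun i hi =>
      sub_ne_zero_of_ne fun h => (Finset.mem_erase.mp hi).1 (hx h).symm
  have hQE : ∀ k j, (∏ i ∈ Finset.univ.erase k, (y j - x i)) ≠ 0 := fun k j =>
    Finset.prod_ne_zero_iff.mpr fun i _ => sub_ne_zero_of_ne fun h => hxy i j h.symm
  have hQ : ∀ k, (∏ i, (y k - x i)) ≠ 0 := fun k =>
    Finset.prod_ne_zero_iff.mpr fun i _ => sub_ne_zero_of_ne fun h => hxy i k h.symm
  set Vx : Matrix (Fin n) (Fin n) ℝ := Matrix.of fun i j : Fin n => x j ^ (i : ℕ) with hVx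
  -- Vx is the transpose of the Vandermonde matrix
  have hVxdet : IsUnit Vx.det := by
    have : Vx = (Matrix.vandermonde x)ᵀ := by
      ext i j; simp [hVx, Matrix.vandermonde]
    rw [this, Matrix.det_transpose]
    exact isUnit_iff_ne_zero.mpr (Matrix.det_vandermonde_ne_zero_iff.mpr hx)
  -- the middle matrix
  set M : Matrix (Fin n) (Fin n) ℝ := Matrix.of fun k j =>
    (∏ m ∈ Finset.univ.erase k, (x k - x m))⁻¹ *
      ∏ m ∈ Finset.univ.erase k, (y j - x m) with hM
  have hVM : Vx * M = Matrix.of fun i j : Fin n => y j ^ (i : ℕ) := by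
    ext i j
    simp only [Matrix.mul_apply, hVx, hM, Matrix.of_apply]
    exact lagrange_sum x hx i (y j)
  have hQinv : (Matrix.diagonal fun k => ∏ i, (y k - x i))⁻¹ =
      Matrix.diagonal fun k => (∏ i, (y k - x i))⁻¹ := by
    apply Matrix.inv_eq_right_inv
    rw [Matrix.diagonal_mul_diagonal]
    convert Matrix.diagonal_one
    exact mul_inv_cancel₀ (hQ _)
  rw [← hVM, hQinv]
  have key : (Matrix.diagonal fun k => ∏ i ∈ Finset.univ.erase k, (x k - x i)) *
        Vx⁻¹ * (Vx * M) = Matrix.of fun k j =>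
          ∏ m ∈ Finset.univ.erase k, (y j - x m) := by
    rw [Matrix.mul_assoc _ Vx⁻¹, ← Matrix.mul_assoc Vx⁻¹, Matrix.nonsing_inv_mul _ hVxdet,
      Matrix.one_mul]
    ext k j
    simp only [Matrix.diagonal_mul, hM, Matrix.of_apply]
    rw [← mul_assoc, mul_inv_cancel₀ (hP k), one_mul]
  rw [key]
  ext i j
  simp only [Matrix.mul_diagonal, Matrix.of_apply, Matrix.neg_apply, Pi.neg_apply]
  have hsplit : (∏ m, (y j - x m)) = (y j - x i) * ∏ m ∈ Finset.univ.erase i, (y j - x m) :=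
    (Finset.mul_prod_erase _ _ (Finset.mem_univ i)).symm
  rw [hsplit, mul_inv, ← mul_assoc, mul_comm (∏ m ∈ Finset.univ.erase i, (y j - x m)),
    mul_assoc, mul_inv_cancel₀ (hQE i j), mul_one]
  rw [one_div, neg_inv, neg_sub]
end

section
/- Let x_1, …, x_{n+1} be real numbers and y_1, …, y_n be pairwise distinct real numbers with x_i ≠ y_j for all 1 ≤ i ≤ n, 1 ≤ j ≤ n, and with x_1, …, x_n pairwise distinct. Let C be the n×n Cauchy matrix with entries C_{i,j} = 1/(x_i − y_j), and set h = Σ_{k=1}^{n+1} x_k − Σ_{k=1}^{n} y_k. Then for every 1 ≤ r ≤ n, Σ_{k=1}^{n} (C^{-1})_{r,k} · (x_k − h) = − ( Π_{k=1}^{n+1} (y_r − x_k) ) / ( Π_{k=1, k≠r}^{n} (y_r − y_k) ). -/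
open Matrix Finset

open Polynomial in
/-- Key identity for the reconstruction step: with `C_{i,j} = 1/(x_i − y_j)` the
`n × n` Cauchy matrix built from `x₁, …, xₙ` and `y₁, …, yₙ`, and
`h = Σ_{k=1}^{n+1} x_k − Σ_{k=1}^{n} y_k`, one has for every `r`
`Σ_k (C⁻¹)_{r,k} (x_k − h) = −( Π_{k=1}^{n+1} (y_r − x_k) ) / ( Π_{k≠r} (y_r − y_k) )`. -/
theorem cauchy_inv_xi_formula {n : ℕ} (x : Fin (n + 1) → ℝ) (y : Fin n → ℝ)
    (hy : Function.Injective y)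
    (hx : Function.Injective fun i : Fin n => x i.castSucc)
    (hxy : ∀ i j : Fin n, x i.castSucc ≠ y j)
    (h : ℝ) (hh : h = ∑ k, x k - ∑ k, y k)
    (C : Matrix (Fin n) (Fin n) ℝ)
    (hC : ∀ i j, C i j = 1 / (x i.castSucc - y j)) :
    ∀ r : Fin n,
      ∑ k, C⁻¹ r k * (x k.castSucc - h) =
        -(∏ k, (y r - x k)) / ∏ k ∈ Finset.univ.erase r, (y r - y k) := by
  intro r
  classical
  have hn : 0 < n := r.pos
  set z : Fin n → ℝ := fun i => x i.castSucc with hz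
  have hyy : ∀ j k : Fin n, j ≠ k → y j - y k ≠ 0 := fun j k hjk =>
    sub_ne_zero.mpr fun e => hjk (hy e)
  have hd : ∀ i j : Fin n, z i - y j ≠ 0 := fun i j => sub_ne_zero.mpr (hxy i j)
  have hprodyy : ∀ j : Fin n, (∏ k ∈ univ.erase j, (y j - y k)) ≠ 0 := fun j =>
    Finset.prod_ne_zero_iff.mpr fun k hk => hyy j k (Ne.symm (Finset.mem_erase.mp hk).1)
  have hPz : ∀ i : Fin n, (∏ j, (z i - y j)) ≠ 0 := fun i =>
    Finset.prod_ne_zero_iff.mpr fun j _ => hd i j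
  set A : Fin n → ℝ := fun j => (∏ k, (y j - x k)) / ∏ k ∈ univ.erase j, (y j - y k) with hA
  set w : Fin n → ℝ := fun j => -(A j) with hwdef
  set b : Fin n → ℝ := fun i => z i - h with hb
  -- ### The key polynomial identity
  set F : ℝ[X] := ∏ k, (X - Polynomial.C (x k)) with hF
  set N : ℝ[X] := ∏ j, (X - Polynomial.C (y j)) with hN
  set G : ℝ[X] := (X - Polynomial.C h) * N with hG
  set S : ℝ[X] := ∑ j, Polynomial.C (A j) * ∏ k ∈ univ.erase j, (X - Polynomial.C (y k))
    with hS
  have monF : F.Monic := monic_prod_of_monic _ _ fun k _ => monic_X_sub_C _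
  have monN : N.Monic := monic_prod_of_monic _ _ fun k _ => monic_X_sub_C _
  have monG : G.Monic := (monic_X_sub_C h).mul monN
  have hdF : F.natDegree = n + 1 := by
    rw [hF, natDegree_prod_of_monic _ _ fun k _ => monic_X_sub_C _]
    simp
  have hdN : N.natDegree = n := by
    rw [hN, natDegree_prod_of_monic _ _ fun k _ => monic_X_sub_C _]
    simp
  have hdG : G.natDegree = n + 1 := by
    rw [hG, (monic_X_sub_C h).natDegree_mul monN, natDegree_X_sub_C, hdN, add_comm]
  have hnextF : F.nextCoeff = -∑ k, x k := by
    rw [hF, Polynomial.Monic.nextCoeff_prod _ _ fun k _ => monic_X_sub_C _]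
    simp [nextCoeff_X_sub_C]
  have hnextG : G.nextCoeff = -∑ k, x k := by
    rw [hG, (monic_X_sub_C h).nextCoeff_mul monN, nextCoeff_X_sub_C, hN,
      Polynomial.Monic.nextCoeff_prod _ _ fun k _ => monic_X_sub_C _]
    simp only [nextCoeff_X_sub_C, Finset.sum_neg_distrib]
    rw [hh]; ring
  -- the difference `F - G` has degree `< n`
  have hdegFG : (F - G).degree < (n : ℕ) := by
    rw [Polynomial.degree_lt_iff_coeff_zero]
    intro m hm
    have hm' : n ≤ m := by exact_mod_cast hm
    rw [Polynomial.coeff_sub]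
    rcases lt_trichotomy m (n + 1) with hlt | heq | hgt
    · have hmn : m = n := le_antisymm (Nat.lt_succ_iff.mp hlt) hm'
      subst hmn
      have h1 : F.coeff m = F.nextCoeff := by
        rw [Polynomial.nextCoeff_of_natDegree_pos (by omega), hdF]; norm_num
      have h2 : G.coeff m = G.nextCoeff := by
        rw [Polynomial.nextCoeff_of_natDegree_pos (by omega), hdG]; norm_num
      rw [h1, h2, hnextF, hnextG, sub_self]
    · subst heq
      rw [← hdF, monF.coeff_natDegree, hdF, ← hdG, monG.coeff_natDegree, sub_self]
    · rw [Polynomial.coeff_eq_zero_of_natDegree_lt (by omega),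
        Polynomial.coeff_eq_zero_of_natDegree_lt (by omega), sub_self]
  have hdegS : S.degree < (n : ℕ) := by
    rw [hS]
    refine lt_of_le_of_lt (Polynomial.degree_sum_le _ _) ?_
    rw [Finset.sup_lt_iff (by exact_mod_cast WithBot.bot_lt_coe n)]
    intro j _
    refine lt_of_le_of_lt (Polynomial.degree_mul_le _ _) ?_
    have h1 : (Polynomial.C (A j)).degree ≤ 0 := Polynomial.degree_C_le
    have h2 : (∏ k ∈ univ.erase j, (X - Polynomial.C (y k)) : ℝ[X]).degree
        = ((n - 1 : ℕ) : WithBot ℕ) := by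
      rw [Polynomial.degree_prod]
      simp [Polynomial.degree_X_sub_C, Finset.card_erase_of_mem]
    calc (Polynomial.C (A j)).degree +
          (∏ k ∈ univ.erase j, (X - Polynomial.C (y k)) : ℝ[X]).degree
        ≤ 0 + ((n - 1 : ℕ) : WithBot ℕ) := add_le_add h1 h2.le
      _ = ((n - 1 : ℕ) : WithBot ℕ) := zero_add _
      _ < (n : ℕ) := by exact_mod_cast Nat.sub_lt hn one_pos
  -- `F - G` and `S` agree at the `n` nodes `y j`
  have hFGS : F - G = S := by
    have hinj : Set.InjOn y (univ : Finset (Fin n)) := fun a _ b _ hab => hy hab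
    refine Polynomial.eq_of_degrees_lt_of_eval_index_eq (univ : Finset (Fin n)) hinj
      (by simpa using hdegFG) (by simpa using hdegS) ?_
    intro j _
    have hGj : G.eval (y j) = 0 := by
      rw [hG, Polynomial.eval_mul, hN, Polynomial.eval_prod]
      have : (∏ k, Polynomial.eval (y j) (X - Polynomial.C (y k))) = 0 :=
        Finset.prod_eq_zero (Finset.mem_univ j) (by simp)
      rw [this, mul_zero]
    have hFj : F.eval (y j) = ∏ k, (y j - x k) := by
      rw [hF, Polynomial.eval_prod]; simp
    have hSj : S.eval (y j) = ∏ k, (y j - x k) := by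
      rw [hS, Polynomial.eval_finset_sum]
      rw [Finset.sum_eq_single j]
      · rw [Polynomial.eval_mul, Polynomial.eval_C, Polynomial.eval_prod]
        simp only [Polynomial.eval_sub, Polynomial.eval_X, Polynomial.eval_C]
        rw [hA, div_mul_cancel₀ _ (hprodyy j)]
      · intro j' _ hj'
        rw [Polynomial.eval_mul, Polynomial.eval_prod]
        exact mul_eq_zero_of_right _ (Finset.prod_eq_zero
          (Finset.mem_erase.mpr ⟨Ne.symm hj', Finset.mem_univ j⟩) (by simp))
      · intro hj; exact absurd (Finset.mem_univ j) hj
    rw [Polynomial.eval_sub, hFj, hGj, hSj, sub_zero]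
  -- evaluate the identity at `z i`
  have key : ∀ i : Fin n,
      (∑ j, A j * ∏ k ∈ univ.erase j, (z i - y k)) = -((z i - h) * ∏ j, (z i - y j)) := by
    intro i
    have hFi : F.eval (z i) = 0 := by
      rw [hF, Polynomial.eval_prod]
      exact Finset.prod_eq_zero (Finset.mem_univ i.castSucc) (by simp [hz])
    have := congrArg (Polynomial.eval (z i)) hFGS
    rw [Polynomial.eval_sub, hFi, zero_sub] at this
    rw [hS, Polynomial.eval_finset_sum] at this
    simp only [Polynomial.eval_mul, Polynomial.eval_C, Polynomial.eval_prod,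
      Polynomial.eval_sub, Polynomial.eval_X] at this
    rw [← this, hG]
    simp [hN, Polynomial.eval_prod]
  -- `C *ᵥ w = b`
  have hCw : C *ᵥ w = b := by
    funext i
    have hkey := key i
    have expand : ∀ j : Fin n,
        A j * ∏ k ∈ univ.erase j, (z i - y k) = (1 / (z i - y j) * A j) * ∏ j', (z i - y j') := by
      intro j
      have hdij := hd i j
      rw [← Finset.mul_prod_erase univ _ (Finset.mem_univ j)]
      field_simp
    rw [Finset.sum_congr rfl fun j _ => expand j, ← Finset.sum_mul] at hkey
    have hsum : (∑ j, 1 / (z i - y j) * A j) = -(z i - h) :=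
      mul_right_cancel₀ (hPz i) (by rw [hkey]; ring)
    show (∑ j, C i j * w j) = b i
    have : (∑ j, C i j * w j) = -∑ j, 1 / (z i - y j) * A j := by
      rw [← Finset.sum_neg_distrib]
      refine Finset.sum_congr rfl fun j _ => ?_
      rw [hC i j, hwdef]
      show 1 / (z i - y j) * (-A j) = -(1 / (z i - y j) * A j)
      ring
    rw [this, hsum, hb]; ring
  -- invertibility of `C`
  have hdet : C.det ≠ 0 := by
    intro hdet0
    obtain ⟨c, hc0, hc⟩ := Matrix.exists_mulVec_eq_zero_iff.mpr hdet0
    set Q : ℝ[X] := ∑ j, Polynomial.C (c j) * ∏ k ∈ univ.erase j, (X - Polynomial.C (y k))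
      with hQ
    have hQdeg : Q.natDegree < Fintype.card (Fin n) := by
      rw [Fintype.card_fin]
      refine lt_of_le_of_lt (Polynomial.natDegree_sum_le_of_forall_le _ _ fun j _ => ?_)
        (Nat.sub_lt hn one_pos)
      refine le_trans (Polynomial.natDegree_mul_le) ?_
      rw [Polynomial.natDegree_C, zero_add,
        natDegree_prod_of_monic _ _ fun k _ => monic_X_sub_C _]
      simp [Finset.card_erase_of_mem]
    have hQeval : ∀ i : Fin n, Q.eval (z i) = 0 := by
      intro i
      have hci : (∑ j, 1 / (z i - y j) * c j) = 0 := by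
        have := congrFun hc i
        simpa [Matrix.mulVec, dotProduct, hC] using this
      rw [hQ, Polynomial.eval_finset_sum]
      simp only [Polynomial.eval_mul, Polynomial.eval_C, Polynomial.eval_prod,
        Polynomial.eval_sub, Polynomial.eval_X]
      have expand : ∀ j : Fin n,
          c j * ∏ k ∈ univ.erase j, (z i - y k) = (1 / (z i - y j) * c j) * ∏ j', (z i - y j') := by
        intro j
        have hdij := hd i j
        rw [← Finset.mul_prod_erase univ _ (Finset.mem_univ j)]
        field_simp
      rw [Finset.sum_congr rfl fun j _ => expand j, ← Finset.sum_mul, hci, zero_mul]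
    have hQ0 : Q = 0 := Polynomial.eq_zero_of_natDegree_lt_card_of_eval_eq_zero Q hx hQeval hQdeg
    apply hc0
    funext j
    have := congrArg (Polynomial.eval (y j)) hQ0
    rw [hQ, Polynomial.eval_finset_sum, Polynomial.eval_zero] at this
    rw [Finset.sum_eq_single j] at this
    · simp only [Polynomial.eval_mul, Polynomial.eval_C, Polynomial.eval_prod,
        Polynomial.eval_sub, Polynomial.eval_X] at this
      exact (mul_eq_zero.mp this).resolve_right (hprodyy j)
    · intro j' _ hj'
      rw [Polynomial.eval_mul, Polynomial.eval_prod]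
      refine mul_eq_zero_of_right _ (Finset.prod_eq_zero
        (Finset.mem_erase.mpr ⟨Ne.symm hj', Finset.mem_univ j⟩) (by simp))
    · intro hj; exact absurd (Finset.mem_univ j) hj
  -- conclusion
  have hone : C⁻¹ * C = 1 := Matrix.nonsing_inv_mul C (Ne.isUnit hdet)
  have : ∑ k, C⁻¹ r k * (x k.castSucc - h) = (C⁻¹ *ᵥ b) r := by
    simp [Matrix.mulVec, dotProduct, hb, hz]
  rw [this, ← hCw, Matrix.mulVec_mulVec, hone, Matrix.one_mulVec, hwdef, hA]
  push_cast
  rw [neg_div]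
end

section
/- Consistency identity for the Cauchy matrix: let x_1, …, x_n and y_1, …, y_n be real numbers such that the x_i are pairwise distinct, the y_j are pairwise distinct, x_i ≠ y_j for all i, j, and all x_i and all y_i are nonzero. Let C be the Cauchy matrix with entries C_{i,j} = 1/(x_i − y_j) and set s = Σ_{k=1}^{n} (x_k − y_k). Then s = Σ_{i,j=1}^{n} (1/y_i) · (C^{-1})_{i,j} · (x_j − s). -/
open Matrix Finset Polynomial

/-- A polynomial of degree `< n` vanishing at `n` distinct points is zero. -/
lemma cauchy_aux_poly_zero {n : ℕ} (y : Fin n → ℝ) (hy : Function.Injective y)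
    (p : Polynomial ℝ) (hdeg : p.natDegree < n) (h : ∀ j, p.eval (y j) = 0) : p = 0 :=
  Polynomial.eq_zero_of_natDegree_lt_card_of_eval_eq_zero p hy h (by simpa using hdeg)

/-- Partial fraction rewriting of a sum `∑ b j / (t - y j)`. -/
lemma cauchy_aux_sum_div {n : ℕ} (y : Fin n → ℝ) (b : Fin n → ℝ) (t : ℝ)
    (ht : ∀ j, t - y j ≠ 0) :
    ∑ j, b j / (t - y j)
      = (∑ j, b j * ∏ k ∈ Finset.univ.erase j, (t - y k)) / ∏ k, (t - y k) := by
  rw [Finset.sum_div]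
  refine Finset.sum_congr rfl fun j _ => ?_
  have h1 : ∏ k ∈ Finset.univ.erase j, (t - y k) ≠ 0 :=
    Finset.prod_ne_zero_iff.mpr fun k _ => ht k
  rw [← Finset.mul_prod_erase Finset.univ _ (Finset.mem_univ j)]
  rw [mul_div_mul_right _ _ h1]

/-- Consistency identity for the Cauchy matrix: with `C_{i,j} = 1/(x_i − y_j)` and
`s = Σ_k (x_k − y_k)`, one has `s = Σ_{i,j} (1/y_i)(C⁻¹)_{i,j}(x_j − s)`. -/
theorem cauchy_consistency_identity {n : ℕ} (x y : Fin n → ℝ)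
    (hx : Function.Injective x) (hy : Function.Injective y)
    (hxy : ∀ i j, x i ≠ y j) (hx0 : ∀ i, x i ≠ 0) (hy0 : ∀ i, y i ≠ 0)
    (C : Matrix (Fin n) (Fin n) ℝ) (hC : ∀ i j, C i j = 1 / (x i - y j))
    (s : ℝ) (hs : s = ∑ k, (x k - y k)) :
    s = ∑ i, ∑ j, (1 / y i) * (C⁻¹ i j * (x j - s)) := by
  classical
  rcases Nat.eq_zero_or_pos n with hn | hn
  · subst hn; simp [hs]
  -- basic nonvanishing facts
  have hxysub : ∀ i j, x i - y j ≠ 0 := fun i j => sub_ne_zero.mpr (hxy i j)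
  have hyysub : ∀ j k, k ≠ j → y j - y k ≠ 0 := fun j k hk =>
    sub_ne_zero.mpr fun h => hk (hy h.symm)
  have hyerase : ∀ j, ∏ k ∈ Finset.univ.erase j, (y j - y k) ≠ 0 := fun j =>
    Finset.prod_ne_zero_iff.mpr fun k hk => hyysub j k (Finset.ne_of_mem_erase hk)
  -- the Cauchy matrix is invertible
  have hdet : C.det ≠ 0 := by
    intro hdet0
    obtain ⟨v, hv0, hv⟩ := (Matrix.exists_mulVec_eq_zero_iff).mpr hdet0
    set P : Polynomial ℝ :=
      ∑ j, Polynomial.C (v j) * ∏ k ∈ Finset.univ.erase j, (X - Polynomial.C (y k)) with hP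
    have hPdeg : P.natDegree < n := by
      have : P.natDegree ≤ n - 1 := by
        apply Polynomial.natDegree_sum_le_of_forall_le
        intro j _
        refine le_trans (Polynomial.natDegree_C_mul_le _ _) ?_
        refine le_trans (Polynomial.natDegree_prod_le _ _) ?_
        simp [Polynomial.natDegree_X_sub_C, Finset.card_erase_of_mem]
      omega
    have hPeval : ∀ i, P.eval (x i) = 0 := by
      intro i
      have hmv := congrFun hv i
      have hmv' : ∑ j, v j / (x i - y j) = 0 := by
        simpa [Matrix.mulVec, dotProduct, hC, div_eq_mul_inv, mul_comm] using hmv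
      have hkey := cauchy_aux_sum_div y v (x i) (fun j => hxysub i j)
      rw [hmv'] at hkey
      have hprod : ∏ k, (x i - y k) ≠ 0 := Finset.prod_ne_zero_iff.mpr fun k _ => hxysub i k
      have hsum0 : ∑ j, v j * ∏ k ∈ Finset.univ.erase j, (x i - y k) = 0 := by
        field_simp at hkey
        rw [zero_mul] at hkey
        exact hkey.symm
      simp only [hP, Polynomial.eval_finset_sum, Polynomial.eval_mul, Polynomial.eval_C,
        Polynomial.eval_prod, Polynomial.eval_sub, Polynomial.eval_X]
      exact hsum0
    have hP0 : P = 0 := cauchy_aux_poly_zero x hx P hPdeg hPeval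
    apply hv0
    funext j
    have hj := congrArg (Polynomial.eval (y j)) hP0
    rw [hP] at hj
    simp only [Polynomial.eval_finset_sum, Polynomial.eval_mul, Polynomial.eval_C,
      Polynomial.eval_prod, Polynomial.eval_sub, Polynomial.eval_X, Polynomial.eval_zero] at hj
    rw [Finset.sum_eq_single j] at hj
    · have := mul_eq_zero.mp hj
      simpa [hyerase j] using this
    · intro j' _ hj'
      have : ∏ k ∈ Finset.univ.erase j', (y j - y k) = 0 :=
        Finset.prod_eq_zero (Finset.mem_erase.mpr ⟨hj'.symm, Finset.mem_univ j⟩) (by ring)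
      simp [this]
    · simp
  -- the interpolation polynomial identity
  set Py : Polynomial ℝ := ∏ k, (X - Polynomial.C (y k)) with hPy
  set Px : Polynomial ℝ := ∏ k, (X - Polynomial.C (x k)) with hPx
  set f : Polynomial ℝ := (X - Polynomial.C s) * Py - X * Px with hf
  have hPymonic : Py.Monic := monic_prod_of_monic _ _ fun k _ => monic_X_sub_C _
  have hPxmonic : Px.Monic := monic_prod_of_monic _ _ fun k _ => monic_X_sub_C _
  have hPydeg : Py.natDegree = n := by
    rw [hPy, Polynomial.natDegree_prod _ _ fun k _ => (monic_X_sub_C (y k)).ne_zero]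
    simp [Polynomial.natDegree_X_sub_C]
  have hPxdeg : Px.natDegree = n := by
    rw [hPx, Polynomial.natDegree_prod _ _ fun k _ => (monic_X_sub_C (x k)).ne_zero]
    simp [Polynomial.natDegree_X_sub_C]
  have hAmonic : ((X - Polynomial.C s) * Py).Monic := (monic_X_sub_C s).mul hPymonic
  have hBmonic : ((X : Polynomial ℝ) * Px).Monic := monic_X.mul hPxmonic
  have hAdeg : ((X - Polynomial.C s) * Py).natDegree = n + 1 := by
    rw [(monic_X_sub_C s).natDegree_mul hPymonic, Polynomial.natDegree_X_sub_C, hPydeg, add_comm]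
  have hBdeg : ((X : Polynomial ℝ) * Px).natDegree = n + 1 := by
    rw [monic_X.natDegree_mul hPxmonic, Polynomial.natDegree_X, hPxdeg, add_comm]
  have hfdeg' : f.degree < (n : ℕ) := by
    rw [Polynomial.degree_lt_iff_coeff_zero]
    intro m hm
    have hm' : n ≤ m := by exact_mod_cast hm
    rw [hf, Polynomial.coeff_sub]
    rcases lt_trichotomy m (n + 1) with h | h | h
    · have hmn : m = n := by omega
      rw [hmn]
      have hA : ((X - Polynomial.C s) * Py).coeff n = -s + -(∑ k, y k) := by
        have h1 : ((X - Polynomial.C s) * Py).nextCoeff = -s + -(∑ k, y k) := by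
          rw [(monic_X_sub_C s).nextCoeff_mul hPymonic, Polynomial.nextCoeff_X_sub_C,
            hPy, Polynomial.prod_X_sub_C_nextCoeff]
        rw [← h1, Polynomial.nextCoeff_of_natDegree_pos (hAdeg ▸ n.succ_pos), hAdeg]
        norm_num
      have hB : ((X : Polynomial ℝ) * Px).coeff n = -(∑ k, x k) := by
        have h1 : ((X : Polynomial ℝ) * Px).nextCoeff = -(∑ k, x k) := by
          rw [monic_X.nextCoeff_mul hPxmonic, hPx, Polynomial.prod_X_sub_C_nextCoeff]
          simp [Polynomial.nextCoeff]
        rw [← h1, Polynomial.nextCoeff_of_natDegree_pos (hBdeg ▸ n.succ_pos), hBdeg]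
        norm_num
      rw [hA, hB]
      have : s = (∑ k, x k) - ∑ k, y k := by
        rw [hs, Finset.sum_sub_distrib]
      rw [this]; ring
    · have hA1 : ((X - Polynomial.C s) * Py).coeff (n + 1) = 1 := by
        rw [← hAdeg]; exact hAmonic.coeff_natDegree
      have hB1 : ((X : Polynomial ℝ) * Px).coeff (n + 1) = 1 := by
        rw [← hBdeg]; exact hBmonic.coeff_natDegree
      rw [h, hA1, hB1]; ring
    · rw [Polynomial.coeff_eq_zero_of_natDegree_lt (by omega),
        Polynomial.coeff_eq_zero_of_natDegree_lt (by omega)]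
      ring
  have hfdeg : f.natDegree < n := by
    rcases eq_or_ne f 0 with h0 | h0
    · rw [h0]; simpa using hn
    · exact (Polynomial.natDegree_lt_iff_degree_lt h0).mpr hfdeg'
  -- the solution vector
  set b : Fin n → ℝ := fun j => f.eval (y j) / ∏ k ∈ Finset.univ.erase j, (y j - y k) with hb
  set Q : Polynomial ℝ :=
    ∑ j, Polynomial.C (b j) * ∏ k ∈ Finset.univ.erase j, (X - Polynomial.C (y k)) with hQ
  have hQdeg : Q.natDegree < n := by
    have : Q.natDegree ≤ n - 1 := by
      apply Polynomial.natDegree_sum_le_of_forall_le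
      intro j _
      refine le_trans (Polynomial.natDegree_C_mul_le _ _) ?_
      refine le_trans (Polynomial.natDegree_prod_le _ _) ?_
      simp [Polynomial.natDegree_X_sub_C, Finset.card_erase_of_mem]
    omega
  have hQeval : ∀ j, Q.eval (y j) = f.eval (y j) := by
    intro j
    rw [hQ]
    simp only [Polynomial.eval_finset_sum, Polynomial.eval_mul, Polynomial.eval_C,
      Polynomial.eval_prod, Polynomial.eval_sub, Polynomial.eval_X]
    rw [Finset.sum_eq_single j]
    · rw [hb]; exact div_mul_cancel₀ _ (hyerase j)
    · intro j' _ hj'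
      have : ∏ k ∈ Finset.univ.erase j', (y j - y k) = 0 :=
        Finset.prod_eq_zero (Finset.mem_erase.mpr ⟨hj'.symm, Finset.mem_univ j⟩) (by ring)
      simp [this]
    · simp
  have hfQ : f = Q := by
    have hg : f - Q = 0 := by
      apply cauchy_aux_poly_zero y hy
      · exact lt_of_le_of_lt (Polynomial.natDegree_sub_le f Q)
          (max_lt hfdeg hQdeg)
      · intro j
        rw [Polynomial.eval_sub, hQeval j, sub_self]
    exact sub_eq_zero.mp hg
  -- evaluation identity
  have key : ∀ t : ℝ, (∀ j, t - y j ≠ 0) →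
      ∑ j, b j / (t - y j) = f.eval t / ∏ k, (t - y k) := by
    intro t ht
    rw [cauchy_aux_sum_div y b t ht, hfQ]
    congr 1
    rw [hQ]
    simp [Polynomial.eval_finset_sum, Polynomial.eval_prod]
  -- identity (1): C.mulVec b = x - s
  have hCb : ∀ i, ∑ j, C i j * b j = x i - s := by
    intro i
    have h1 : ∑ j, C i j * b j = ∑ j, b j / (x i - y j) := by
      refine Finset.sum_congr rfl fun j _ => ?_
      rw [hC]; ring
    rw [h1, key (x i) (fun j => hxysub i j)]
    have hprod : ∏ k, (x i - y k) ≠ 0 := Finset.prod_ne_zero_iff.mpr fun k _ => hxysub i k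
    have hfx : f.eval (x i) = (x i - s) * ∏ k, (x i - y k) := by
      rw [hf]
      have hx0' : Px.eval (x i) = 0 := by
        rw [hPx]
        simp only [Polynomial.eval_prod, Polynomial.eval_sub, Polynomial.eval_X,
          Polynomial.eval_C]
        exact Finset.prod_eq_zero (Finset.mem_univ i) (by ring)
      simp [hx0', hPy, Polynomial.eval_prod]
    rw [hfx, mul_div_cancel_right₀ _ hprod]
  -- identity (2): ∑ b j / y j = s
  have hby : ∑ j, b j / y j = s := by
    have ht : ∀ j, (0 : ℝ) - y j ≠ 0 := fun j => by
      simpa using neg_ne_zero.mpr (hy0 j)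
    have h0 := key 0 ht
    have hf0 : f.eval 0 = (0 - s) * ∏ k, (0 - y k) := by
      rw [hf]
      simp [hPy, Polynomial.eval_prod]
    rw [hf0] at h0
    have hprod : ∏ k, ((0:ℝ) - y k) ≠ 0 := Finset.prod_ne_zero_iff.mpr fun k _ => ht k
    rw [mul_div_cancel_right₀ _ hprod] at h0
    have : ∑ j, b j / ((0:ℝ) - y j) = -∑ j, b j / y j := by
      rw [← Finset.sum_neg_distrib]
      refine Finset.sum_congr rfl fun j _ => ?_
      rw [zero_sub, div_neg]
    rw [this] at h0
    linarith
  -- conclude using the inverse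
  have hinv : ∀ i, ∑ j, C⁻¹ i j * (x j - s) = b i := by
    intro i
    have hmv : C.mulVec b = fun j => x j - s := by
      funext j
      rw [Matrix.mulVec, dotProduct]
      exact hCb j
    have h2 : C⁻¹.mulVec (C.mulVec b) = b := by
      rw [Matrix.mulVec_mulVec, Matrix.nonsing_inv_mul C (isUnit_iff_ne_zero.mpr hdet),
        Matrix.one_mulVec]
    rw [hmv] at h2
    have := congrFun h2 i
    simpa [Matrix.mulVec, dotProduct] using this
  have hfinal : ∀ i, ∑ j, (1 / y i) * (C⁻¹ i j * (x j - s)) = b i / y i := by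
    intro i
    rw [← Finset.mul_sum, hinv i]
    rw [one_div, inv_mul_eq_div]
  rw [Finset.sum_congr rfl fun i _ => hfinal i, hby]
end

section
/- Uniqueness up to sign for the pentadiagonal inductive step unless the α-condition holds: let n ≥ 2, let v_1, …, v_n be an orthonormal basis of ℝ^n, and let ξ_1, …, ξ_n > 0. Suppose a, b ∈ ℝ^n are two vectors whose first n−2 coordinates vanish (a_k = b_k = 0 for 1 ≤ k ≤ n−2) and which satisfy |⟨a, v_r⟩| = |⟨b, v_r⟩| = ξ_r for every 1 ≤ r ≤ n. If b ≠ a and b ≠ −a, then there exist a real number α and a subset I ⊆ {1,…,n} with I ≠ ∅ and I ≠ {1,…,n} such that for every r ∈ I one has (v_r)_{n−1} = α (v_r)_n, for every r ∉ I one has α (v_r)_{n−1} = −(v_r)_n, and α² = 1/S_I − 1 where S_I = Σ_{i∈I} ((v_i)_n)². -/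
open Matrix Finset

private lemma alpha_sq {n : ℕ} (x y : Fin n → ℝ) (α : ℝ) (I : Finset (Fin n))
    (hx2 : ∑ r, x r * x r = 1) (hy2 : ∑ r, y r * y r = 1) (hxy : ∑ r, x r * y r = 0)
    (h1 : ∀ r ∈ I, x r = α * y r) (h2 : ∀ r ∉ I, α * x r = -(y r)) :
    α ^ 2 = 1 / (∑ i ∈ I, (y i) ^ 2) - 1 := by
  have key : (∑ i ∈ I, (y i) ^ 2) * (1 + α ^ 2) = 1 := by
    rcases eq_or_ne α 0 with h0 | h0
    · subst h0
      have hy0 : ∀ r ∉ I, y r = 0 := by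
        intro r hr
        have := h2 r hr
        rw [zero_mul] at this
        linarith
      have hS : ∑ i ∈ I, (y i) ^ 2 = ∑ r, y r * y r := by
        rw [Finset.sum_subset (Finset.subset_univ I) (fun r _ hr => by rw [hy0 r hr]; ring)]
        exact Finset.sum_congr rfl fun r _ => by ring
      rw [hS, hy2]; ring
    · have e1 : ∑ r ∈ I, x r * y r = α * ∑ i ∈ I, (y i) ^ 2 := by
        rw [Finset.mul_sum]
        exact Finset.sum_congr rfl fun r hr => by rw [h1 r hr]; ring
      have e2 : ∑ r ∈ Iᶜ, x r * y r = -(α * ∑ r ∈ Iᶜ, x r * x r) := by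
        rw [Finset.mul_sum, ← Finset.sum_neg_distrib]
        refine Finset.sum_congr rfl fun r hr => ?_
        have h := h2 r (Finset.mem_compl.mp hr)
        have hy : y r = -(α * x r) := by linarith
        rw [hy]; ring
      have e3 : ∑ r ∈ I, x r * x r = α ^ 2 * ∑ i ∈ I, (y i) ^ 2 := by
        rw [Finset.mul_sum]
        exact Finset.sum_congr rfl fun r hr => by rw [h1 r hr]; ring
      have hsxy := Finset.sum_add_sum_compl I (fun r => x r * y r)
      have hsxx := Finset.sum_add_sum_compl I (fun r => x r * x r)
      rw [e1, e2, hxy] at hsxy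
      rw [e3, hx2] at hsxx
      have hSC : (∑ i ∈ I, (y i) ^ 2) = ∑ r ∈ Iᶜ, x r * x r :=
        mul_left_cancel₀ h0 (by linarith)
      nlinarith [hSC, hsxx]
  have hS0 : (∑ i ∈ I, (y i) ^ 2) ≠ 0 := by
    intro h
    rw [h, zero_mul] at key
    norm_num at key
  rw [eq_sub_iff_add_eq, eq_div_iff hS0]
  linear_combination key

private lemma penta_core {n : ℕ} (x y : Fin n → ℝ)
    (hx2 : ∑ r, x r * x r = 1) (hy2 : ∑ r, y r * y r = 1) (hxy : ∑ r, x r * y r = 0)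
    (p q s t : ℝ)
    (hnea : ¬(s = p ∧ t = q)) (hneb : ¬(s = -p ∧ t = -q))
    (hnorm : s ^ 2 + t ^ 2 = p ^ 2 + q ^ 2)
    (ε : Fin n → Prop) [DecidablePred ε]
    (hplus : ∀ r, ε r → s * x r + t * y r = p * x r + q * y r)
    (hminus : ∀ r, ¬ ε r → s * x r + t * y r = -(p * x r + q * y r))
    (hne : ∃ r, ε r) (hne' : ∃ r, ¬ ε r) :
    ∃ (α : ℝ) (I : Finset (Fin n)), I ≠ ∅ ∧ I ≠ Finset.univ ∧
      (∀ r ∈ I, x r = α * y r) ∧ (∀ r ∉ I, α * x r = -(y r)) ∧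
      α ^ 2 = 1 / (∑ i ∈ I, (y i) ^ 2) - 1 := by
  obtain ⟨r₀, hr₀⟩ := hne
  obtain ⟨r₁, hr₁⟩ := hne'
  have horth : (s - p) * (s + p) + (t - q) * (t + q) = 0 := by linear_combination hnorm
  by_cases hsp : s = p
  · -- case s = p : take α = 0, I = {r | ¬ ε r}
    have htq : t ≠ q := fun h => hnea ⟨hsp, h⟩
    have h0 : (t - q) * (t + q) = 0 := by
      rw [hsp] at horth; linear_combination horth
    have htq' : t + q = 0 := (mul_eq_zero.mp h0).resolve_left (sub_ne_zero.mpr htq)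
    have ht : t = -q := by linarith
    have hp0 : p ≠ 0 := by
      intro h
      exact hneb ⟨by rw [hsp, h, neg_zero], ht⟩
    have hq0 : q ≠ 0 := by
      intro hq
      exact htq (by rw [ht, hq, neg_zero])
    have hin : ∀ r ∈ Finset.univ.filter (fun r => ¬ ε r), x r = 0 * y r := by
      intro r hr
      have hr' : ¬ ε r := (Finset.mem_filter.mp hr).2
      have h := hminus r hr'
      rw [hsp, ht] at h
      have hx0 : p * x r = 0 := by linear_combination h / 2
      rw [zero_mul]
      exact (mul_eq_zero.mp hx0).resolve_left hp0
    have hout : ∀ r ∉ Finset.univ.filter (fun r => ¬ ε r), 0 * x r = -(y r) := by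
      intro r hr
      have hr' : ε r := by
        by_contra hc
        exact hr (Finset.mem_filter.mpr ⟨Finset.mem_univ r, hc⟩)
      have h := hplus r hr'
      rw [hsp, ht] at h
      have hy0 : q * y r = 0 := by linear_combination -h / 2
      have hy : y r = 0 := (mul_eq_zero.mp hy0).resolve_left hq0
      rw [zero_mul, hy, neg_zero]
    refine ⟨0, Finset.univ.filter (fun r => ¬ ε r), ?_, ?_, hin, hout,
      alpha_sq x y 0 _ hx2 hy2 hxy hin hout⟩
    · exact Finset.ne_empty_of_mem (Finset.mem_filter.mpr ⟨Finset.mem_univ r₁, hr₁⟩)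
    · intro h
      have hmem : r₀ ∈ Finset.univ.filter (fun r => ¬ ε r) := by rw [h]; exact Finset.mem_univ r₀
      exact (Finset.mem_filter.mp hmem).2 hr₀
  · -- case s ≠ p : take α = -(t-q)/(s-p), I = {r | ε r}
    have hsp' : s - p ≠ 0 := sub_ne_zero.mpr hsp
    have hin : ∀ r ∈ Finset.univ.filter (fun r => ε r), x r = -(t - q) / (s - p) * y r := by
      intro r hr
      have h := hplus r (Finset.mem_filter.mp hr).2
      rw [div_mul_eq_mul_div, eq_div_iff hsp']
      linear_combination h
    have hout : ∀ r ∉ Finset.univ.filter (fun r => ε r),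
        -(t - q) / (s - p) * x r = -(y r) := by
      intro r hr
      have hr' : ¬ ε r := fun hc => hr (Finset.mem_filter.mpr ⟨Finset.mem_univ r, hc⟩)
      have hw : (s + p) * x r + (t + q) * y r = 0 := by linear_combination hminus r hr'
      have hB : t + q ≠ 0 := by
        intro hB
        have hA : (s - p) * (s + p) = 0 := by linear_combination horth - (t - q) * hB
        have hsum0 : s + p = 0 := (mul_eq_zero.mp hA).resolve_left hsp'
        exact hneb ⟨by linarith, by linarith⟩
      have key : (t + q) * ((t - q) * x r - (s - p) * y r) = 0 := by
        linear_combination x r * horth - (s - p) * hw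
      have key2 : (t - q) * x r - (s - p) * y r = 0 :=
        (mul_eq_zero.mp key).resolve_left hB
      rw [div_mul_eq_mul_div, div_eq_iff hsp']
      linear_combination -key2
    refine ⟨-(t - q) / (s - p), Finset.univ.filter (fun r => ε r), ?_, ?_, hin, hout,
      alpha_sq x y _ _ hx2 hy2 hxy hin hout⟩
    · exact Finset.ne_empty_of_mem (Finset.mem_filter.mpr ⟨Finset.mem_univ r₀, hr₀⟩)
    · intro h
      have hmem : r₁ ∈ Finset.univ.filter (fun r => ε r) := by rw [h]; exact Finset.mem_univ r₁
      exact hr₁ (Finset.mem_filter.mp hmem).2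

/-- Uniqueness up to sign for the pentadiagonal inductive step unless the
α-condition holds: if `v₁, …, vₙ` is an orthonormal basis of `ℝⁿ`, `ξ_r > 0`, and
`a, b` are two vectors with vanishing first `n−2` coordinates satisfying
`|⟨a, v_r⟩| = |⟨b, v_r⟩| = ξ_r` for all `r`, and `b ≠ ±a`, then the α-condition
holds: there are `α ∈ ℝ` and `∅ ≠ I ⊊ {1,…,n}` with `(v_r)_{n−1} = α (v_r)_n` for
`r ∈ I`, `α (v_r)_{n−1} = −(v_r)_n` for `r ∉ I`, and `α² = 1/S_I − 1` where
`S_I = Σ_{i∈I} ((v_i)_n)²`. -/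
theorem penta_alpha_condition {n : ℕ} (hn : 2 ≤ n)
    (v : Fin n → Fin n → ℝ)
    (hortho : ∀ r s, v r ⬝ᵥ v s = if r = s then 1 else 0)
    (ξ : Fin n → ℝ) (hξ : ∀ r, 0 < ξ r)
    (a b : Fin n → ℝ)
    (haz : ∀ k : Fin n, (k : ℕ) < n - 2 → a k = 0)
    (hbz : ∀ k : Fin n, (k : ℕ) < n - 2 → b k = 0)
    (ha : ∀ r, |a ⬝ᵥ v r| = ξ r) (hb : ∀ r, |b ⬝ᵥ v r| = ξ r)
    (hba : b ≠ a) (hba' : b ≠ -a) :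
    ∃ (α : ℝ) (I : Finset (Fin n)), I ≠ ∅ ∧ I ≠ Finset.univ ∧
      (∀ r ∈ I, v r ⟨n - 2, by omega⟩ = α * v r ⟨n - 1, by omega⟩) ∧
      (∀ r ∉ I, α * v r ⟨n - 2, by omega⟩ = -(v r ⟨n - 1, by omega⟩)) ∧
      α ^ 2 = 1 / (∑ i ∈ I, (v i ⟨n - 1, by omega⟩) ^ 2) - 1 := by
  classical
  have hn2 : n - 2 < n := by omega
  have hn1 : n - 1 < n := by omega
  have he12 : (⟨n - 2, hn2⟩ : Fin n) ≠ ⟨n - 1, hn1⟩ := by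
    simp only [ne_eq, Fin.mk.injEq]
    omega
  -- matrix form and column orthonormality
  have hV : (Matrix.of v) * (Matrix.of v)ᵀ = 1 := by
    ext r s'
    simpa [Matrix.mul_apply, Matrix.one_apply, dotProduct] using hortho r s'
  have hV' : (Matrix.of v)ᵀ * (Matrix.of v) = 1 := mul_eq_one_comm.mp hV
  have hcol : ∀ k l : Fin n, ∑ r, v r k * v r l = if k = l then 1 else 0 := by
    intro k l
    have := congrFun (congrFun hV' k) l
    simpa [Matrix.mul_apply, Matrix.transpose_apply, Matrix.one_apply] using this
  have hker : ∀ c : Fin n → ℝ, (∀ r, c ⬝ᵥ v r = 0) → c = 0 := by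
    intro c hc
    have h1 : (Matrix.of v) *ᵥ c = 0 := by
      funext r
      show v r ⬝ᵥ c = 0
      rw [dotProduct_comm]
      exact hc r
    calc c = ((Matrix.of v)ᵀ * (Matrix.of v)) *ᵥ c := by rw [hV', Matrix.one_mulVec]
      _ = (Matrix.of v)ᵀ *ᵥ ((Matrix.of v) *ᵥ c) := by rw [← Matrix.mulVec_mulVec]
      _ = 0 := by rw [h1, Matrix.mulVec_zero]
  -- expansion of dot products for vectors supported on the last two coordinates
  have hexp : ∀ c : Fin n → ℝ, (∀ k : Fin n, (k : ℕ) < n - 2 → c k = 0) →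
      ∀ r, c ⬝ᵥ v r =
        c ⟨n - 2, hn2⟩ * v r ⟨n - 2, hn2⟩ + c ⟨n - 1, hn1⟩ * v r ⟨n - 1, hn1⟩ := by
    intro c hc r
    have hsub : (∑ k ∈ ({⟨n - 2, hn2⟩, ⟨n - 1, hn1⟩} : Finset (Fin n)), c k * v r k)
        = ∑ k, c k * v r k := by
      refine Finset.sum_subset (Finset.subset_univ _) ?_
      intro k _ hk
      simp only [Finset.mem_insert, Finset.mem_singleton] at hk
      push_neg at hk
      have h1 : (k : ℕ) ≠ n - 2 := fun h => hk.1 (Fin.ext h)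
      have h2 : (k : ℕ) ≠ n - 1 := fun h => hk.2 (Fin.ext h)
      have h3 := k.isLt
      rw [hc k (by omega), zero_mul]
    rw [dotProduct, ← hsub, Finset.sum_pair he12]
  have hx2 : ∑ r, v r ⟨n - 2, hn2⟩ * v r ⟨n - 2, hn2⟩ = 1 := by
    simpa using hcol ⟨n - 2, hn2⟩ ⟨n - 2, hn2⟩
  have hy2 : ∑ r, v r ⟨n - 1, hn1⟩ * v r ⟨n - 1, hn1⟩ = 1 := by
    simpa using hcol ⟨n - 1, hn1⟩ ⟨n - 1, hn1⟩
  have hxy : ∑ r, v r ⟨n - 2, hn2⟩ * v r ⟨n - 1, hn1⟩ = 0 := by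
    simpa [he12] using hcol ⟨n - 2, hn2⟩ ⟨n - 1, hn1⟩
  -- sums of squares of expanded dot products
  have hsum : ∀ P Q : ℝ,
      ∑ r, (P * v r ⟨n - 2, hn2⟩ + Q * v r ⟨n - 1, hn1⟩) ^ 2 = P ^ 2 + Q ^ 2 := by
    intro P Q
    calc ∑ r, (P * v r ⟨n - 2, hn2⟩ + Q * v r ⟨n - 1, hn1⟩) ^ 2
        = ∑ r, (P ^ 2 * (v r ⟨n - 2, hn2⟩ * v r ⟨n - 2, hn2⟩)
            + Q ^ 2 * (v r ⟨n - 1, hn1⟩ * v r ⟨n - 1, hn1⟩)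
            + (2 * P * Q) * (v r ⟨n - 2, hn2⟩ * v r ⟨n - 1, hn1⟩)) :=
          Finset.sum_congr rfl fun r _ => by ring
      _ = P ^ 2 * (∑ r, v r ⟨n - 2, hn2⟩ * v r ⟨n - 2, hn2⟩)
            + Q ^ 2 * (∑ r, v r ⟨n - 1, hn1⟩ * v r ⟨n - 1, hn1⟩)
            + (2 * P * Q) * (∑ r, v r ⟨n - 2, hn2⟩ * v r ⟨n - 1, hn1⟩) := by
          rw [Finset.sum_add_distrib, Finset.sum_add_distrib, ← Finset.mul_sum,
            ← Finset.mul_sum, ← Finset.mul_sum]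
      _ = P ^ 2 + Q ^ 2 := by rw [hx2, hy2, hxy]; ring
  have hnorma : (a ⟨n - 2, hn2⟩) ^ 2 + (a ⟨n - 1, hn1⟩) ^ 2 = ∑ r, ξ r ^ 2 := by
    rw [← hsum (a ⟨n - 2, hn2⟩) (a ⟨n - 1, hn1⟩)]
    refine Finset.sum_congr rfl fun r _ => ?_
    rw [← hexp a haz r, ← sq_abs, ha r]
  have hnormb : (b ⟨n - 2, hn2⟩) ^ 2 + (b ⟨n - 1, hn1⟩) ^ 2 = ∑ r, ξ r ^ 2 := by
    rw [← hsum (b ⟨n - 2, hn2⟩) (b ⟨n - 1, hn1⟩)]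
    refine Finset.sum_congr rfl fun r _ => ?_
    rw [← hexp b hbz r, ← sq_abs, hb r]
  have hnorm : (b ⟨n - 2, hn2⟩) ^ 2 + (b ⟨n - 1, hn1⟩) ^ 2
      = (a ⟨n - 2, hn2⟩) ^ 2 + (a ⟨n - 1, hn1⟩) ^ 2 := hnormb.trans hnorma.symm
  -- b ≠ a and b ≠ -a in terms of the last two coordinates
  have hnea : ¬(b ⟨n - 2, hn2⟩ = a ⟨n - 2, hn2⟩ ∧ b ⟨n - 1, hn1⟩ = a ⟨n - 1, hn1⟩) := by
    rintro ⟨h1, h2⟩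
    apply hba
    funext k
    by_cases hk : (k : ℕ) < n - 2
    · rw [hbz k hk, haz k hk]
    · have hk2 := k.isLt
      rcases (show (k : ℕ) = n - 2 ∨ (k : ℕ) = n - 1 by omega) with h | h
      · have hkk : k = ⟨n - 2, hn2⟩ := Fin.ext h
        rw [hkk]; exact h1
      · have hkk : k = ⟨n - 1, hn1⟩ := Fin.ext h
        rw [hkk]; exact h2
  have hneb : ¬(b ⟨n - 2, hn2⟩ = -(a ⟨n - 2, hn2⟩) ∧ b ⟨n - 1, hn1⟩ = -(a ⟨n - 1, hn1⟩)) := by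
    rintro ⟨h1, h2⟩
    apply hba'
    funext k
    show b k = -(a k)
    by_cases hk : (k : ℕ) < n - 2
    · rw [hbz k hk, haz k hk, neg_zero]
    · have hk2 := k.isLt
      rcases (show (k : ℕ) = n - 2 ∨ (k : ℕ) = n - 1 by omega) with h | h
      · have hkk : k = ⟨n - 2, hn2⟩ := Fin.ext h
        rw [hkk]; exact h1
      · have hkk : k = ⟨n - 1, hn1⟩ := Fin.ext h
        rw [hkk]; exact h2
  -- sign dichotomy
  have habs : ∀ r, b ⬝ᵥ v r = a ⬝ᵥ v r ∨ b ⬝ᵥ v r = -(a ⬝ᵥ v r) := fun r =>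
    abs_eq_abs.mp ((hb r).trans (ha r).symm)
  have hne : ∃ r, b ⬝ᵥ v r = a ⬝ᵥ v r := by
    by_contra hc
    push_neg at hc
    apply hba'
    have hz : b + a = 0 := by
      refine hker (b + a) fun r => ?_
      rw [add_dotProduct]
      rcases habs r with h | h
      · exact absurd h (hc r)
      · rw [h]; ring
    exact eq_neg_of_add_eq_zero_left hz
  have hne' : ∃ r, ¬(b ⬝ᵥ v r = a ⬝ᵥ v r) := by
    by_contra hc
    push_neg at hc
    apply hba
    have hz : b - a = 0 := by
      refine hker (b - a) fun r => ?_
      rw [sub_dotProduct, hc r, sub_self]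
    exact sub_eq_zero.mp hz
  have hplus : ∀ r, b ⬝ᵥ v r = a ⬝ᵥ v r →
      b ⟨n - 2, hn2⟩ * v r ⟨n - 2, hn2⟩ + b ⟨n - 1, hn1⟩ * v r ⟨n - 1, hn1⟩
      = a ⟨n - 2, hn2⟩ * v r ⟨n - 2, hn2⟩ + a ⟨n - 1, hn1⟩ * v r ⟨n - 1, hn1⟩ := by
    intro r hr
    rw [← hexp b hbz r, ← hexp a haz r]
    exact hr
  have hminus : ∀ r, ¬(b ⬝ᵥ v r = a ⬝ᵥ v r) →
      b ⟨n - 2, hn2⟩ * v r ⟨n - 2, hn2⟩ + b ⟨n - 1, hn1⟩ * v r ⟨n - 1, hn1⟩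
      = -(a ⟨n - 2, hn2⟩ * v r ⟨n - 2, hn2⟩ + a ⟨n - 1, hn1⟩ * v r ⟨n - 1, hn1⟩) := by
    intro r hr
    rw [← hexp b hbz r, ← hexp a haz r]
    exact (habs r).resolve_left hr
  obtain ⟨α, I, hI1, hI2, hI3, hI4, hI5⟩ :=
    penta_core (fun r => v r ⟨n - 2, hn2⟩) (fun r => v r ⟨n - 1, hn1⟩) hx2 hy2 hxy
      (a ⟨n - 2, hn2⟩) (a ⟨n - 1, hn1⟩) (b ⟨n - 2, hn2⟩) (b ⟨n - 1, hn1⟩)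
      hnea hneb hnorm (fun r => b ⬝ᵥ v r = a ⬝ᵥ v r) hplus hminus hne hne'
  exact ⟨α, I, hI1, hI2, hI3, hI4, hI5⟩
end

section
/- Degenerate eigenvectors have zero last entry (cases II, III, IV): let A be an (n+1)×(n+1) real symmetric matrix with top-left n×n principal submatrix B. Suppose λ is an eigenvalue of B with multiplicity m+1 (m ≥ 0), that all other eigenvalues of B are simple, that all eigenvalues of A other than λ are simple, that no eigenvalue of A other than λ coincides with an eigenvalue of B other than λ, and that the multiplicity of λ as an eigenvalue of A is at most m+1. Then every eigenvector of A with eigenvalue λ has last coordinate equal to zero. -/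
open Matrix Polynomial


lemma my_charpoly_diagonal {k : ℕ} (d : Fin k → ℝ) :
    (Matrix.diagonal d).charpoly = ∏ i, (X - C (d i)) := by
  have h : charmatrix (diagonal d) = diagonal (fun i => (X : ℝ[X]) - C (d i)) := by
    ext i j
    by_cases h : i = j
    · subst h; simp
    · rw [charmatrix_apply_ne _ _ _ h, diagonal_apply_ne _ h, diagonal_apply_ne _ h,
        map_zero, neg_zero]
  rw [Matrix.charpoly, h, det_diagonal]

lemma my_charpoly_conj {k : ℕ} (U V M : Matrix (Fin k) (Fin k) ℝ)
    (hUV : U * V = 1) : (U * M * V).charpoly = M.charpoly := by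
  have hC : (U.map (C : ℝ → ℝ[X])) * (V.map C) = 1 := by
    rw [← Matrix.map_mul, hUV, Matrix.map_one _ (map_zero C) (map_one C)]
  have hdet : (U.map (C : ℝ → ℝ[X])).det * (V.map C).det = 1 := by
    rw [← det_mul, hC, det_one]
  have hchar : charmatrix (U * M * V) = (U.map C) * charmatrix M * (V.map C) := by
    unfold charmatrix
    simp only [RingHom.mapMatrix_apply, Matrix.map_mul]
    rw [Matrix.mul_sub, Matrix.sub_mul]
    congr 1
    have hD : (diagonal fun _ : Fin k => (X:ℝ[X])) = (X:ℝ[X]) • 1 := by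
      rw [smul_eq_diagonal_mul, Matrix.mul_one]
    rw [scalar_apply, hD, mul_smul_comm, Matrix.mul_one, smul_mul_assoc, hC]
  rw [Matrix.charpoly, Matrix.charpoly, hchar, det_mul, det_mul, mul_right_comm,
    hdet, one_mul]

lemma my_herm_charpoly {k : ℕ} {M : Matrix (Fin k) (Fin k) ℝ} (hM : M.IsHermitian) :
    M.charpoly = ∏ i, (X - C (hM.eigenvalues i)) := by
  conv_lhs => rw [hM.spectral_theorem, Unitary.conjStarAlgAut_apply]
  rw [my_charpoly_conj _ _ _ (Matrix.mem_unitaryGroup_iff.mp (hM.eigenvectorUnitary).2)]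
  have : (RCLike.ofReal ∘ hM.eigenvalues : Fin k → ℝ) = hM.eigenvalues := by
    funext i; simp
  rw [this, my_charpoly_diagonal]

lemma my_rootMult {k : ℕ} {M : Matrix (Fin k) (Fin k) ℝ} (hM : M.IsHermitian) (μ : ℝ) :
    M.charpoly.rootMultiplicity μ = Fintype.card {i // hM.eigenvalues i = μ} := by
  rw [← Polynomial.count_roots, my_herm_charpoly hM]
  have h1 : (∏ i, (X - C (hM.eigenvalues i))) =
      ((Finset.univ.val.map hM.eigenvalues).map (fun a => X - C a)).prod := by
    rw [Multiset.map_map]; rfl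
  rw [h1, roots_multiset_prod_X_sub_C, Multiset.count_map, Fintype.card_subtype, Finset.card,
    Finset.filter_val]
  congr 1
  exact Multiset.filter_congr (fun x _ => ⟨Eq.symm, Eq.symm⟩)

lemma my_ker_finrank {k : ℕ} {M : Matrix (Fin k) (Fin k) ℝ} (hM : M.IsHermitian) (μ : ℝ) :
    Module.finrank ℝ (LinearMap.ker (M - μ • 1).mulVecLin) = M.charpoly.rootMultiplicity μ := by
  have hU := Matrix.mem_unitaryGroup_iff.mp (hM.eigenvectorUnitary).2
  set U : Matrix (Fin k) (Fin k) ℝ := (hM.eigenvectorUnitary : Matrix (Fin k) (Fin k) ℝ)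
  have hconj : M - μ • 1 = U * (diagonal fun i => hM.eigenvalues i - μ) * star U := by
    have h1 : (μ • 1 : Matrix (Fin k) (Fin k) ℝ) = U * (diagonal fun _ => μ) * star U := by
      have : (diagonal fun _ : Fin k => μ) = μ • (1 : Matrix (Fin k) (Fin k) ℝ) := by
        rw [smul_eq_diagonal_mul, Matrix.mul_one]
      rw [this, mul_smul_comm, Matrix.mul_one, smul_mul_assoc, hU]
    conv_lhs => rw [hM.spectral_theorem, Unitary.conjStarAlgAut_apply, h1]
    rw [← Matrix.sub_mul, ← Matrix.mul_sub, diagonal_sub]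
    congr 1
  have hrank : (M - μ • 1).rank = Fintype.card {i // hM.eigenvalues i ≠ μ} := by
    rw [hconj]
    have hu1 : IsUnit (star U).det := IsUnit.of_mul_eq_one U.det
      (by rw [← det_mul, Matrix.mem_unitaryGroup_iff'.mp (hM.eigenvectorUnitary).2, det_one])
    have hu2 : IsUnit U.det := IsUnit.of_mul_eq_one (star U).det
      (by rw [← det_mul, hU, det_one])
    rw [rank_mul_eq_left_of_isUnit_det _ _ hu1, rank_mul_eq_right_of_isUnit_det _ _ hu2,
      rank_diagonal]
    simp [sub_ne_zero]
  have hrn := LinearMap.finrank_range_add_finrank_ker (M - μ • 1).mulVecLin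
  simp only [Module.finrank_pi, Fintype.card_fin] at hrn  -- finrank (Fin k → ℝ) = k
  have hrankdef : (M - μ • 1).rank = Module.finrank ℝ (LinearMap.range (M - μ • 1).mulVecLin) := rfl
  have hcards : Fintype.card {i // hM.eigenvalues i = μ} + Fintype.card {i // hM.eigenvalues i ≠ μ}
      = k := by
    rw [Fintype.card_subtype, Fintype.card_subtype]
    have h := Finset.card_filter_add_card_filter_not
      (s := (Finset.univ : Finset (Fin k))) (p := fun i => hM.eigenvalues i = μ)
    simpa using h
  rw [my_rootMult hM μ]
  omega

lemma mem_eigker {k : ℕ} (M : Matrix (Fin k) (Fin k) ℝ) (μ : ℝ) (v : Fin k → ℝ) :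
    v ∈ LinearMap.ker (M - μ • 1).mulVecLin ↔ M *ᵥ v = μ • v := by
  rw [LinearMap.mem_ker, mulVecLin_apply, sub_mulVec, smul_mulVec, one_mulVec, sub_eq_zero]

def snocLM (n : ℕ) : (Fin n → ℝ) →ₗ[ℝ] (Fin (n+1) → ℝ) where
  toFun v := Fin.snoc v 0
  map_add' a b := by
    funext i
    induction i using Fin.lastCases with
    | last => simp
    | cast i => simp
  map_smul' r a := by
    funext i
    induction i using Fin.lastCases with
    | last => simp
    | cast i => simp

/-- Degenerate eigenvectors have zero last entry (cases II, III, IV): let `A` be an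
`(n+1) × (n+1)` real symmetric matrix with top-left `n × n` principal submatrix `B`.
If `λ` is an eigenvalue of `B` with multiplicity `m+1`, all other eigenvalues of `B`
are simple, all eigenvalues of `A` other than `λ` are simple, no eigenvalue of `A`
other than `λ` coincides with an eigenvalue of `B` other than `λ`, and the
multiplicity of `λ` as an eigenvalue of `A` is at most `m+1`, then every eigenvector
of `A` with eigenvalue `λ` has last coordinate zero. -/
theorem degenerate_eigenvector_last_entry_zero {n : ℕ}
    (A : Matrix (Fin (n + 1)) (Fin (n + 1)) ℝ) (hA : A.IsSymm)
    (B : Matrix (Fin n) (Fin n) ℝ)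
    (hB : B = A.submatrix Fin.castSucc Fin.castSucc)
    (lam : ℝ) (m : ℕ)
    (hmB : B.charpoly.rootMultiplicity lam = m + 1)
    (hsimpleB : ∀ μ : ℝ, μ ≠ lam → B.charpoly.rootMultiplicity μ ≤ 1)
    (hsimpleA : ∀ μ : ℝ, μ ≠ lam → A.charpoly.rootMultiplicity μ ≤ 1)
    (hdisj : ∀ μ : ℝ, μ ≠ lam → B.charpoly.IsRoot μ → ¬ A.charpoly.IsRoot μ)
    (hmA : A.charpoly.rootMultiplicity lam ≤ m + 1) :
    ∀ w : Fin (n + 1) → ℝ, w ≠ 0 → A.mulVec w = lam • w →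
      w (Fin.last n) = 0 := by
  intro w hw0 hw
  by_contra ht
  have hBH : B.IsHermitian := by
    rw [Matrix.IsHermitian, conjTranspose_eq_transpose_of_trivial, hB, transpose_submatrix, hA]
  have hAH : A.IsHermitian := by
    rw [Matrix.IsHermitian, conjTranspose_eq_transpose_of_trivial]; exact hA
  have hsym : ∀ i j, A i j = A j i := fun i j => (congrFun (congrFun hA i) j).symm
  set t := w (Fin.last n) with htdef
  set c : Fin n → ℝ := fun i => A i.castSucc (Fin.last n) with hc
  set x : Fin n → ℝ := fun i => w i.castSucc with hx
  have hentry : ∀ i j, B i j = A i.castSucc j.castSucc := by intro i j; rw [hB]; rfl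
  -- row equations from the eigenvalue equation of w
  have hrow : ∀ i : Fin n, (B *ᵥ x) i + c i * t = lam * x i := by
    intro i
    have h := congrFun hw i.castSucc
    simp only [Pi.smul_apply, smul_eq_mul] at h
    rw [mulVec, dotProduct, Fin.sum_univ_castSucc] at h
    rw [mulVec, dotProduct]
    simp only [hentry, hx, hc]
    exact h
  have hBx : B *ᵥ x = lam • x - t • c := by
    funext i
    simp only [Pi.sub_apply, Pi.smul_apply, smul_eq_mul]
    have := hrow i
    ring_nf
    ring_nf at this
    linarith
  -- c is orthogonal to the eigenspace of B
  have horth : ∀ v : Fin n → ℝ, B *ᵥ v = lam • v → c ⬝ᵥ v = 0 := by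
    intro v hv
    have h1 : v ⬝ᵥ (B *ᵥ x) = (B *ᵥ v) ⬝ᵥ x := by
      rw [dotProduct_mulVec]
      congr 1
      have hBsymm : Bᵀ = B := by rw [hB, transpose_submatrix, hA]
      rw [← mulVec_transpose, hBsymm]
    rw [hBx, hv] at h1
    rw [dotProduct_sub, dotProduct_smul, dotProduct_smul, smul_dotProduct] at h1
    have h2 : t * (v ⬝ᵥ c) = 0 := by
      simp only [smul_eq_mul, dotProduct_comm x v] at h1
      linarith
    rw [dotProduct_comm]
    exact (mul_eq_zero.mp h2).resolve_left ht
  set EB := LinearMap.ker (B - lam • 1).mulVecLin with hEB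
  set EA := LinearMap.ker (A - lam • 1).mulVecLin with hEA
  have hφinj : Function.Injective (snocLM n) := by
    intro a b hab
    funext i
    have h := congrFun hab i.castSucc
    simpa [snocLM] using h
  set S := Submodule.map (snocLM n) EB with hS
  have hSle : S ≤ EA := by
    rintro u ⟨v, hv, rfl⟩
    have hv' : B *ᵥ v = lam • v := (mem_eigker B lam v).mp hv
    have h0 : c ⬝ᵥ v = 0 := horth v hv'
    refine (mem_eigker A lam _).mpr ?_
    have hfun : ((snocLM n) v : Fin (n+1) → ℝ) = Fin.snoc v 0 := rfl
    rw [hfun]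
    funext i
    show (A *ᵥ (Fin.snoc v 0 : Fin (n+1) → ℝ)) i = _
    rw [mulVec, dotProduct, Fin.sum_univ_castSucc]
    induction i using Fin.lastCases with
    | last =>
      simp only [Fin.snoc_castSucc, Fin.snoc_last, mul_zero, add_zero, Pi.smul_apply,
        smul_eq_mul]
      calc ∑ j : Fin n, A (Fin.last n) j.castSucc * v j
          = ∑ j : Fin n, c j * v j :=
            Finset.sum_congr rfl fun j _ => by rw [hsym (Fin.last n) j.castSucc]
        _ = 0 := h0
    | cast i =>
      simp only [Fin.snoc_castSucc, Fin.snoc_last, mul_zero, add_zero, Pi.smul_apply,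
        smul_eq_mul]
      calc ∑ j : Fin n, A i.castSucc j.castSucc * v j
          = ∑ j : Fin n, B i j * v j :=
            Finset.sum_congr rfl fun j _ => by rw [← hentry]
        _ = lam * v i := by
            have h := congrFun hv' i
            rw [mulVec, dotProduct] at h
            simpa using h
  have hwA : w ∈ EA := (mem_eigker A lam w).mpr hw
  have hwS : w ∉ S := by
    rintro ⟨v, -, hv⟩
    apply ht
    show w (Fin.last n) = 0
    rw [← congrFun hv (Fin.last n)]
    show (Fin.snoc v 0 : Fin (n+1) → ℝ) (Fin.last n) = 0
    simp
  have hEBrank : Module.finrank ℝ EB = m + 1 := by rw [hEB, my_ker_finrank hBH, hmB]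
  have hEArank : Module.finrank ℝ EA ≤ m + 1 := by rw [hEA, my_ker_finrank hAH]; exact hmA
  have hSrank : Module.finrank ℝ S = m + 1 := by
    rw [← hEBrank]
    exact (Submodule.equivMapOfInjective (snocLM n) hφinj EB).finrank_eq.symm
  have hwsup : w ∈ S ⊔ Submodule.span ℝ {w} :=
    Submodule.mem_sup_right (Submodule.mem_span_singleton_self w)
  have hlt : S < S ⊔ Submodule.span ℝ {w} :=
    lt_of_le_of_ne le_sup_left (fun h => hwS (h ▸ hwsup))
  have hle : S ⊔ Submodule.span ℝ {w} ≤ EA :=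
    sup_le hSle ((Submodule.span_singleton_le_iff_mem w EA).mpr hwA)
  have h1 := Submodule.finrank_lt_finrank_of_lt hlt
  have h2 := Submodule.finrank_mono hle
  omega
end

section
/- Orthogonality of the new column to the degenerate eigenspace (case I): let A be an (n+1)×(n+1) real symmetric matrix with top-left n×n principal submatrix B, and let a ∈ ℝ^n be the off-diagonal part of the last column of A (a_j = A_{j,n+1}). Suppose λ is an eigenvalue of B with multiplicity m+1 (m ≥ 0) and λ is an eigenvalue of A with multiplicity m+2. Then a is orthogonal to the λ-eigenspace of B: ⟨a, v⟩ = 0 for every eigenvector v of B with eigenvalue λ. Moreover, every eigenvector of A whose eigenvalue is different from λ is orthogonal to the subspace {(v,0) : v is a λ-eigenvector of B} of ℝ^{n+1}. -/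
open Matrix Polynomial

open Module

variable {k : ℕ}

noncomputable def eigSp (M : Matrix (Fin k) (Fin k) ℝ) (lam : ℝ) : Submodule ℝ (Fin k → ℝ) :=
  LinearMap.ker (M.mulVecLin - lam • LinearMap.id)

lemma mem_eigSp {M : Matrix (Fin k) (Fin k) ℝ} {lam : ℝ} {v : Fin k → ℝ} :
    v ∈ eigSp M lam ↔ M.mulVec v = lam • v := by
  simp [eigSp, LinearMap.mem_ker, sub_eq_zero, Matrix.mulVecLin_apply]

lemma herm_basis (M : Matrix (Fin k) (Fin k) ℝ) (hM : M.IsHermitian) :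
    ∃ b : Basis (Fin k) ℝ (Fin k → ℝ),
      (∀ j, M.mulVec (b j) = hM.eigenvalues j • b j) := by
  refine ⟨(hM.eigenvectorBasis.toBasis).map (WithLp.linearEquiv 2 ℝ (Fin k → ℝ)), ?_⟩
  intro j
  have h1 : ((hM.eigenvectorBasis.toBasis).map (WithLp.linearEquiv 2 ℝ (Fin k → ℝ))) j
      = ⇑(hM.eigenvectorBasis j) := by
    simp [Basis.map_apply]
  rw [h1]
  exact hM.mulVec_eigenvectorBasis j

lemma charpoly_mulVecLin (M : Matrix (Fin k) (Fin k) ℝ) :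
    M.charpoly = LinearMap.charpoly M.mulVecLin := by
  have h0 : LinearMap.toMatrix (Pi.basisFun ℝ (Fin k)) (Pi.basisFun ℝ (Fin k)) M.mulVecLin
      = M := by
    ext i j
    simp [LinearMap.toMatrix_apply, Matrix.mulVecLin_apply]
  conv_lhs => rw [← h0]
  rw [LinearMap.charpoly_toMatrix]

lemma herm_rootMult (M : Matrix (Fin k) (Fin k) ℝ) (hM : M.IsHermitian) (lam : ℝ) :
    M.charpoly.rootMultiplicity lam
      = (Finset.univ.filter fun i => hM.eigenvalues i = lam).card := by
  classical
  obtain ⟨b, hbv⟩ := herm_basis M hM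
  have h2 : LinearMap.toMatrix b b M.mulVecLin = Matrix.diagonal hM.eigenvalues := by
    ext i j
    rw [LinearMap.toMatrix_apply, Matrix.mulVecLin_apply, hbv j, _root_.map_smul, b.repr_self]
    by_cases h : i = j <;> simp [h, Matrix.diagonal, Finsupp.single_apply, eq_comm]
  have h1 : M.charpoly = (Matrix.diagonal hM.eigenvalues).charpoly := by
    rw [charpoly_mulVecLin, ← LinearMap.charpoly_toMatrix M.mulVecLin b, h2]
  have h3 : (Matrix.diagonal hM.eigenvalues).charpoly
      = ∏ i : Fin k, (X - C (hM.eigenvalues i)) := by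
    rw [Matrix.charpoly_of_upperTriangular _ (Matrix.blockTriangular_diagonal _)]
    simp
  have h4 : (∏ i : Fin k, (X - C (hM.eigenvalues i)))
      = ((Finset.univ.val.map hM.eigenvalues).map fun a => X - C a).prod := by
    rw [Multiset.map_map]
    rfl
  rw [h1, h3, ← Polynomial.count_roots, h4, Polynomial.roots_multiset_prod_X_sub_C,
    Multiset.count_map]
  have h5 : (Multiset.filter (fun a => lam = hM.eigenvalues a) Finset.univ.val)
      = Multiset.filter (fun a => hM.eigenvalues a = lam) Finset.univ.val := by
    apply Multiset.filter_congr
    intro x _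
    exact eq_comm
  rw [h5]
  rfl

lemma herm_finrank (M : Matrix (Fin k) (Fin k) ℝ) (hM : M.IsHermitian) (lam : ℝ) :
    Module.finrank ℝ (eigSp M lam)
      = (Finset.univ.filter fun i => hM.eigenvalues i = lam).card := by
  classical
  obtain ⟨b, hbv⟩ := herm_basis M hM
  set S : Finset (Fin k) := Finset.univ.filter fun i => hM.eigenvalues i = lam with hS
  have hspan : eigSp M lam = Submodule.span ℝ (b '' ↑S) := by
    apply le_antisymm
    · intro v hv
      rw [mem_eigSp] at hv
      have hexp : ∀ c : Fin k → ℝ, M.mulVec (∑ j, c j • b j)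
          = ∑ j, (c j * hM.eigenvalues j) • b j := by
        intro c
        have := map_sum M.mulVecLin (fun j => c j • b j) Finset.univ
        simp only [Matrix.mulVecLin_apply] at this
        rw [this]
        refine Finset.sum_congr rfl fun j _ => ?_
        rw [Matrix.mulVec_smul, hbv j, smul_smul]
      have hv' : M.mulVec v = ∑ j, (b.repr v j * hM.eigenvalues j) • b j := by
        conv_lhs => rw [← b.sum_repr v]
        exact hexp _
      have hlv : lam • v = ∑ j, (lam * b.repr v j) • b j := by
        conv_lhs => rw [← b.sum_repr v]
        rw [Finset.smul_sum]
        refine Finset.sum_congr rfl fun j _ => ?_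
        rw [smul_smul]
      have hco : ∀ i, b.repr v i * hM.eigenvalues i = lam * b.repr v i := by
        have heq := hv'.symm.trans (hv.trans hlv)
        have h5 := congrArg (fun x => (b.repr x : Fin k →₀ ℝ)) heq
        simp only [map_sum, _root_.map_smul, b.repr_self] at h5
        intro i
        have := congrArg (fun f : Fin k →₀ ℝ => f i) h5
        simpa [Finsupp.single_apply] using this
      have hzero : ∀ i, i ∉ S → b.repr v i = 0 := by
        intro i hi
        have hne : hM.eigenvalues i ≠ lam := by
          simpa [hS] using hi
        have h6 : hM.eigenvalues i * b.repr v i = lam * b.repr v i := by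
          rw [mul_comm]; exact hco i
        rcases mul_eq_mul_right_iff.mp h6 with h | h
        · exact absurd h hne
        · exact h
      have hvS : ∑ i ∈ S, b.repr v i • b i = v := by
        rw [Finset.sum_subset S.subset_univ (fun i _ hi => by rw [hzero i hi, zero_smul])]
        exact b.sum_repr v
      rw [← hvS]
      exact Submodule.sum_mem _ fun i hi =>
        Submodule.smul_mem _ _ (Submodule.subset_span ⟨i, by simpa using hi, rfl⟩)
    · rw [Submodule.span_le]
      rintro x ⟨i, hi, rfl⟩
      have hi' : hM.eigenvalues i = lam := by simpa [hS] using hi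
      rw [SetLike.mem_coe, mem_eigSp, hbv i, hi']
  have hli : LinearIndependent ℝ (fun x : ↥(↑S : Set (Fin k)) => b ↑x) :=
    b.linearIndependent.comp _ Subtype.val_injective
  rw [hspan, Set.image_eq_range, finrank_span_eq_card hli]
  simp

section Main

variable {n : ℕ}

lemma row_split (A : Matrix (Fin (n + 1)) (Fin (n + 1)) ℝ) (w : Fin (n + 1) → ℝ)
    (i : Fin (n + 1)) :
    A.mulVec w i = (∑ j : Fin n, A i j.castSucc * w j.castSucc) + A i (Fin.last n) * w (Fin.last n) := by
  simp [Matrix.mulVec, dotProduct, Fin.sum_univ_castSucc]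

lemma key_restrict (A : Matrix (Fin (n + 1)) (Fin (n + 1)) ℝ) (hA : A.IsSymm)
    (B : Matrix (Fin n) (Fin n) ℝ)
    (hB : B = A.submatrix Fin.castSucc Fin.castSucc)
    (a : Fin n → ℝ) (ha : ∀ j, a j = A j.castSucc (Fin.last n))
    (lam : ℝ) (w : Fin (n + 1) → ℝ) (hw : A.mulVec w = lam • w)
    (hlast : w (Fin.last n) = 0) :
    B.mulVec (w ∘ Fin.castSucc) = lam • (w ∘ Fin.castSucc) ∧ a ⬝ᵥ (w ∘ Fin.castSucc) = 0 := by
  have hsym : ∀ i j, A i j = A j i := fun i j => (congrFun (congrFun hA i) j).symm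
  constructor
  · funext i
    have h1 := congrFun hw i.castSucc
    rw [row_split, hlast, mul_zero, add_zero] at h1
    simpa [Matrix.mulVec, dotProduct, hB, Matrix.submatrix] using h1
  · have h1 := congrFun hw (Fin.last n)
    rw [row_split, hlast, mul_zero, add_zero, Pi.smul_apply, hlast, smul_eq_mul,
      mul_zero] at h1
    have h2 : ∀ j : Fin n, A (Fin.last n) j.castSucc = a j := by
      intro j; rw [ha j, hsym]
    calc a ⬝ᵥ (w ∘ Fin.castSucc) = ∑ j : Fin n, A (Fin.last n) j.castSucc * w j.castSucc := by
          simp only [dotProduct, Function.comp_apply]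
          exact Finset.sum_congr rfl fun j _ => by rw [h2]
      _ = 0 := h1

lemma key_extend (A : Matrix (Fin (n + 1)) (Fin (n + 1)) ℝ)
    (B : Matrix (Fin n) (Fin n) ℝ)
    (hB : B = A.submatrix Fin.castSucc Fin.castSucc)
    (a : Fin n → ℝ) (ha : ∀ j, a j = A j.castSucc (Fin.last n))
    (hsym : ∀ i j, A i j = A j i)
    (lam : ℝ) (v : Fin n → ℝ) (hv : B.mulVec v = lam • v) (hav : a ⬝ᵥ v = 0) :
    A.mulVec (Fin.snoc v 0 : Fin (n + 1) → ℝ) = lam • (Fin.snoc v 0 : Fin (n + 1) → ℝ) := by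
  funext i
  rw [row_split]
  simp only [Fin.snoc_last, mul_zero, add_zero, Fin.snoc_castSucc]
  refine Fin.lastCases ?_ ?_ i
  · have : ∑ j : Fin n, A (Fin.last n) j.castSucc * v j = a ⬝ᵥ v := by
      simp only [dotProduct]
      exact Finset.sum_congr rfl fun j _ => by rw [ha j, hsym]
    simp [this, hav]
  · intro i
    have : ∑ j : Fin n, A i.castSucc j.castSucc * v j = B.mulVec v i := by
      simp [Matrix.mulVec, dotProduct, hB, Matrix.submatrix]
    rw [this, hv]
    simp

end Main

/-- Orthogonality of the new column to the degenerate eigenspace (case I): let `A`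
be an `(n+1) × (n+1)` real symmetric matrix with top-left `n × n` principal
submatrix `B` and off-diagonal last column `a`. If `λ` is an eigenvalue of `B` with
multiplicity `m+1` and an eigenvalue of `A` with multiplicity `m+2`, then `a` is
orthogonal to the `λ`-eigenspace of `B`, and every eigenvector of `A` with
eigenvalue different from `λ` is orthogonal to every vector `(v,0)` with `v` a
`λ`-eigenvector of `B`. -/
theorem caseI_orthogonality {n : ℕ}
    (A : Matrix (Fin (n + 1)) (Fin (n + 1)) ℝ) (hA : A.IsSymm)
    (B : Matrix (Fin n) (Fin n) ℝ)
    (hB : B = A.submatrix Fin.castSucc Fin.castSucc)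
    (a : Fin n → ℝ) (ha : ∀ j, a j = A j.castSucc (Fin.last n))
    (lam : ℝ) (m : ℕ)
    (hmB : B.charpoly.rootMultiplicity lam = m + 1)
    (hmA : A.charpoly.rootMultiplicity lam = m + 2) :
    (∀ v : Fin n → ℝ, v ≠ 0 → B.mulVec v = lam • v → a ⬝ᵥ v = 0) ∧
      (∀ (μ : ℝ) (w : Fin (n + 1) → ℝ), μ ≠ lam → w ≠ 0 → A.mulVec w = μ • w →
        ∀ v : Fin n → ℝ, v ≠ 0 → B.mulVec v = lam • v →
          (Fin.snoc v 0 : Fin (n + 1) → ℝ) ⬝ᵥ w = 0) := by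
  classical
  have hsym : ∀ i j, A i j = A j i := fun i j => (congrFun (congrFun hA i) j).symm
  have hAH : A.IsHermitian := by
    rw [Matrix.IsHermitian, Matrix.conjTranspose]
    ext i j
    simp [hsym j i]
  have hBH : B.IsHermitian := by
    rw [Matrix.IsHermitian, Matrix.conjTranspose]
    ext i j
    simp [hB, Matrix.submatrix, hsym]
  have hdA : Module.finrank ℝ (eigSp A lam) = m + 2 := by
    rw [herm_finrank A hAH lam, ← herm_rootMult A hAH lam, hmA]
  have hdB : Module.finrank ℝ (eigSp B lam) = m + 1 := by
    rw [herm_finrank B hBH lam, ← herm_rootMult B hBH lam, hmB]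
  -- the linear functional v ↦ a ⬝ᵥ v
  let l : (Fin n → ℝ) →ₗ[ℝ] ℝ :=
    { toFun := fun v => a ⬝ᵥ v
      map_add' := fun x y => dotProduct_add a x y
      map_smul' := fun c x => dotProduct_smul c a x }
  let K : Submodule ℝ (Fin n → ℝ) := eigSp B lam ⊓ LinearMap.ker l
  -- evaluation at last coordinate on eigSp A lam
  let f : (eigSp A lam) →ₗ[ℝ] ℝ :=
    (LinearMap.proj (Fin.last n)).comp (eigSp A lam).subtype
  have hker : m + 1 ≤ Module.finrank ℝ (LinearMap.ker f) := by
    have h1 := LinearMap.finrank_range_add_finrank_ker f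
    have h2 : Module.finrank ℝ (LinearMap.range f) ≤ 1 := by
      simpa using Submodule.finrank_le (LinearMap.range f)
    omega
  -- restriction map into K
  let ψ : (LinearMap.ker f) →ₗ[ℝ] (Fin n → ℝ) :=
    (LinearMap.funLeft ℝ ℝ Fin.castSucc).comp
      ((eigSp A lam).subtype.comp (LinearMap.ker f).subtype)
  have hψmem : ∀ x : LinearMap.ker f, ψ x ∈ K := by
    rintro ⟨⟨w, hw⟩, hwf⟩
    have hw' : A.mulVec w = lam • w := mem_eigSp.mp hw
    have hlast : w (Fin.last n) = 0 := hwf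
    obtain ⟨h1, h2⟩ := key_restrict A hA B hB a ha lam w hw' hlast
    exact ⟨mem_eigSp.mpr h1, h2⟩
  let ψ' : (LinearMap.ker f) →ₗ[ℝ] K := (ψ.codRestrict K hψmem)
  have hψinj : Function.Injective ψ' := by
    rintro ⟨⟨w, hw⟩, hwf⟩ ⟨⟨w', hw'⟩, hwf'⟩ h
    have h0 : ∀ i : Fin n, w i.castSucc = w' i.castSucc := by
      intro i
      exact congrFun (congrArg Subtype.val h) i
    have : w = w' := by
      funext i
      refine Fin.lastCases ?_ ?_ i
      · exact hwf.trans hwf'.symm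
      · exact h0
    simp [this]
  have hKge : m + 1 ≤ Module.finrank ℝ K :=
    le_trans hker (LinearMap.finrank_le_finrank_of_injective hψinj)
  have hKle : K ≤ eigSp B lam := inf_le_left
  have hKeq : K = eigSp B lam := by
    apply Submodule.eq_of_le_of_finrank_le hKle
    omega
  have claim1 : ∀ v : Fin n → ℝ, B.mulVec v = lam • v → a ⬝ᵥ v = 0 := by
    intro v hv
    have : v ∈ K := hKeq.symm ▸ (mem_eigSp.mpr hv)
    exact this.2
  refine ⟨fun v _ hv => claim1 v hv, ?_⟩
  intro μ w hμ _ hw v _ hv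
  have hav : a ⬝ᵥ v = 0 := claim1 v hv
  have hs := key_extend A B hB a ha hsym lam v hv hav
  set s : Fin (n + 1) → ℝ := (Fin.snoc v 0 : Fin (n + 1) → ℝ) with hsdef
  have h1 : s ⬝ᵥ (A.mulVec w) = lam * (s ⬝ᵥ w) := by
    rw [Matrix.dotProduct_mulVec]
    have h2 : s ᵥ* A = A.mulVec s := by
      rw [← Matrix.mulVec_transpose, hA]
    rw [h2, hs, smul_dotProduct, smul_eq_mul]
  have h3 : s ⬝ᵥ (A.mulVec w) = μ * (s ⬝ᵥ w) := by
    rw [hw, dotProduct_smul, smul_eq_mul]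
  have : (μ - lam) * (s ⬝ᵥ w) = 0 := by
    rw [sub_mul, ← h3, ← h1, sub_self]
  rcases mul_eq_zero.mp this with h | h
  · exact absurd (sub_eq_zero.mp h) hμ
  · exact h
end
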